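/- arXiv:2411.07358 — 13 statements merged into one kernel-verified Lean document; each statement's English description precedes it below -/
import Mathlib

section
/- Let R be a unital ring whose characteristic is nonzero (i.e., CharP R m for some natural number m ≠ 0) and let a ∈ R. If there exists a polynomial q ∈ ℤ[x] whose coefficients have greatest common divisor 1 (i.e., q has content 1) such that q(a) = 0 (where the constant term of q is multiplied by the identity 1 ∈ R in the evaluation), then a is integral over ℤ, i.e., there exists a monic polynomial s ∈ ℤ[x] with s(a) = 0. -/
open Polynomial

lemma prime_case (q : Polynomial ℤ) (hq : q.content = 1) (p : ℕ) (hp : p.Prime) :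
    ∃ f u v : Polynomial ℤ, f.Monic ∧ f = u * q + v * C (p : ℤ) := by
  haveI : Fact p.Prime := ⟨hp⟩
  set φ := Int.castRingHom (ZMod p) with hφ
  have hqbar : q.map φ ≠ 0 := by
    intro h0
    have hdvd : C (p : ℤ) ∣ q := by
      rw [Polynomial.C_dvd_iff_dvd_coeff]
      intro i
      have : φ (q.coeff i) = 0 := by
        have := congrArg (fun r => Polynomial.coeff r i) h0
        simpa [Polynomial.coeff_map] using this
      exact (ZMod.intCast_zmod_eq_zero_iff_dvd _ p).mp this
    have hu : IsUnit ((p : ℤ)) :=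
      (Polynomial.isPrimitive_iff_content_eq_one.mpr hq) _ hdvd
    rcases Int.isUnit_iff.mp hu with h | h
    · have : p = 1 := by exact_mod_cast h
      exact hp.one_lt.ne' this
    · have : (1:ℤ) < (p:ℤ) := by exact_mod_cast hp.one_lt
      omega
  have hmonic : (q.map φ * C (q.map φ).leadingCoeff⁻¹).Monic :=
    Polynomial.monic_mul_leadingCoeff_inv hqbar
  obtain ⟨e, he⟩ := ZMod.intCast_surjective ((q.map φ).leadingCoeff⁻¹ : ZMod p)
  have hmem : q.map φ * C (q.map φ).leadingCoeff⁻¹ ∈ Polynomial.lifts φ := by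
    refine ⟨q * C e, ?_⟩
    simp only [coe_mapRingHom, Polynomial.map_mul, Polynomial.map_C]
    rw [show φ e = ((e : ZMod p)) from rfl, he]
  obtain ⟨f, hfmap, -, hfmonic⟩ := Polynomial.lifts_and_degree_eq_and_monic hmem hmonic
  have hr : (q * C e - f).map φ = 0 := by
    rw [Polynomial.map_sub, hfmap, Polynomial.map_mul, Polynomial.map_C]
    simp [he]
  have hdvd : C (p : ℤ) ∣ q * C e - f := by
    rw [Polynomial.C_dvd_iff_dvd_coeff]
    intro i
    have : φ ((q * C e - f).coeff i) = 0 := by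
      have := congrArg (fun r => Polynomial.coeff r i) hr
      simpa [Polynomial.coeff_map] using this
    exact (ZMod.intCast_zmod_eq_zero_iff_dvd _ p).mp this
  obtain ⟨w, hw⟩ := hdvd
  refine ⟨f, C e, -w, hfmonic, ?_⟩
  have : f = q * C e - C (p : ℤ) * w := by linear_combination -hw
  rw [this]; ring

lemma key (q : Polynomial ℤ) (hq : q.content = 1) :
    ∀ m : ℕ, m ≠ 0 → ∃ f u v : Polynomial ℤ, f.Monic ∧ f = u * q + v * C (m : ℤ) := by
  intro m
  induction m using Nat.strong_induction_on with
  | _ m ih =>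
    intro hm
    rcases eq_or_ne m 1 with rfl | hm1
    · exact ⟨X, 0, X, monic_X, by simp⟩
    · obtain ⟨p, hp, hpd⟩ := Nat.exists_prime_and_dvd hm1
      obtain ⟨k, hk⟩ := hpd
      have hk0 : k ≠ 0 := by rintro rfl; simp at hk; exact hm hk
      have hklt : k < m := by
        rw [hk]
        exact lt_mul_of_one_lt_left (Nat.pos_of_ne_zero hk0) hp.one_lt
      obtain ⟨f₁, u₁, v₁, hf₁m, hf₁⟩ := ih k hklt hk0
      obtain ⟨f₂, u₂, v₂, hf₂m, hf₂⟩ := prime_case q hq p hp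
      refine ⟨f₁ * f₂, u₁ * u₂ * q + u₁ * v₂ * C (p : ℤ) + v₁ * C (k : ℤ) * u₂,
        v₁ * v₂, hf₁m.mul hf₂m, ?_⟩
      have hmc : (m : ℤ) = (p : ℤ) * (k : ℤ) := by exact_mod_cast hk
      rw [hf₁, hf₂, hmc, Polynomial.C_mul]
      ring

/-- If `R` is a unital ring of nonzero characteristic and `a ∈ R` is annihilated by an
integer polynomial whose coefficients have gcd `1` (content `1`), then `a` is integral
over `ℤ`. -/
theorem stmt_0 (R : Type*) [Ring R] (m : ℕ) (hm : m ≠ 0) [CharP R m] (a : R)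
    (q : Polynomial ℤ) (hq : q.content = 1) (hqa : Polynomial.aeval a q = 0) :
    IsIntegral ℤ a := by
  obtain ⟨f, u, v, hfm, hf⟩ := key q hq m hm
  refine ⟨f, hfm, ?_⟩
  have hC : (Polynomial.aeval a (C (m : ℤ)) : R) = 0 := by
    rw [Polynomial.aeval_C]
    simp [CharP.cast_eq_zero R m]
  show Polynomial.aeval a f = 0
  rw [hf, map_add, map_mul, map_mul, hqa, hC, mul_zero, mul_zero, add_zero]
end

section
/- If R is an infinite (possibly nonunital) ring, then the cardinality of the set of one-generated subrings of R equals the cardinality of R. -/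
/-!
Every `⟨a⟩` is countable, being the `ℤ`-span of the powers of `a`, and `a ↦ ⟨a⟩` is onto the
one-generated subrings, so it suffices to show that an infinite ring has infinitely many of them.
Suppose there are only finitely many.

If some `c` has infinite additive order, take `d = j₀ • c` with `⟨d⟩` minimal among the `⟨j • c⟩`,
`j ≠ 0`. Then `d ∈ ⟨j • d⟩` for every `j ≠ 0`, which forces `d = v * d` for some `v ∈ ⟨d⟩`. Such a
`v` is an idempotent of infinite additive order, and the subrings `⟨m • v⟩ = ℤ • m • v` are
pairwise distinct.

Otherwise some `⟨a⟩` is infinite while `n • a = 0` for some `n ≠ 0`. Two of the subrings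
`⟨a ^ (k + 1)⟩` coincide, so `a` is killed by `f(T)` for a primitive `f ∈ ℤ[X]`, where `T` is right
multiplication by `a`. Modulo a prime `p` the polynomial `f` has a unit leading coefficient, so
the span `M` of the powers of `a` lies in `W + p • M`, where `W` is spanned by the first
`deg f` powers. Running through the prime factors of `n` gives `M ⊆ W + n • M = W`, and `W` is a
finitely generated torsion group, hence finite.
-/

open Cardinal Polynomial Submodule Set
open scoped Pointwise

namespace Module.End

section CommSemiring

variable {R M : Type*} [CommSemiring R] [AddCommMonoid M] [Module R M]
  (T : Module.End R M) (x : M)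

def krylovSubmodule (K : ℕ) : Submodule R M := span R ((fun i => (T ^ i) x) '' Iio K)

def cyclicSubmodule : Submodule R M := span R (range fun i => (T ^ i) x)

variable {T x}

theorem krylovSubmodule_mono : Monotone (krylovSubmodule T x) :=
  fun _ _ h => span_mono (image_mono (Iio_subset_Iio h))

theorem krylovSubmodule_le_cyclicSubmodule (K : ℕ) :
    krylovSubmodule T x K ≤ cyclicSubmodule T x :=
  span_mono (image_subset_range _ _)

theorem pow_apply_mem_cyclicSubmodule (k : ℕ) {y : M} (hy : y ∈ cyclicSubmodule T x) :
    (T ^ k) y ∈ cyclicSubmodule T x := by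
  refine (span_le.mpr ?_ : cyclicSubmodule T x ≤ (cyclicSubmodule T x).comap (T ^ k)) hy
  rintro _ ⟨i, rfl⟩
  exact subset_span ⟨k + i, by simp only [pow_add, mul_apply]⟩

theorem pow_apply_mem_krylovSubmodule_sup {N : Submodule R M} (hN : N ≤ N.comap T) {K : ℕ}
    (hK : (T ^ K) x ∈ krylovSubmodule T x K ⊔ N) (m : ℕ) :
    (T ^ m) x ∈ krylovSubmodule T x K ⊔ N := by
  set V := krylovSubmodule T x K ⊔ N
  have hV : V ≤ V.comap T := by
    refine sup_le (span_le.mpr ?_) (hN.trans (comap_mono le_sup_right))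
    rintro _ ⟨i, hi, rfl⟩
    rw [SetLike.mem_coe, mem_comap, ← mul_apply, ← pow_succ']
    rcases (Nat.succ_le_of_lt hi).lt_or_eq with hlt | rfl
    · exact mem_sup_left (subset_span ⟨i + 1, hlt, rfl⟩)
    · exact hK
  induction m with
  | zero =>
    rcases K.eq_zero_or_pos with rfl | hK0
    · exact hK
    · exact mem_sup_left (subset_span ⟨0, hK0, rfl⟩)
  | succ m ih =>
    rw [pow_succ', mul_apply]
    exact hV ih

theorem exists_aeval_apply_eq_of_mem_cyclicSubmodule {y : M} (hy : y ∈ cyclicSubmodule T x) :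
    ∃ g : R[X], aeval T g x = y := by
  induction hy using span_induction with
  | mem y hy => obtain ⟨i, rfl⟩ := hy; exact ⟨X ^ i, by simp⟩
  | zero => exact ⟨0, by simp⟩
  | add y z _ _ hy hz =>
    obtain ⟨g, rfl⟩ := hy; obtain ⟨h, rfl⟩ := hz; exact ⟨g + h, by simp⟩
  | smul c y _ hy => obtain ⟨g, rfl⟩ := hy; exact ⟨c • g, by simp⟩

end CommSemiring

section Int

variable {M : Type*} [AddCommGroup M] {T : Module.End ℤ M} {x : M}

theorem exists_pow_apply_mem_krylovSubmodule_sup_smul {f : ℤ[X]} (hf : f.IsPrimitive)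
    (hfx : aeval T f x = 0) {p : ℤ} (hp : Prime p) :
    ∃ K ≤ f.natDegree, (T ^ K) x ∈ krylovSubmodule T x K ⊔ p • cyclicSubmodule T x := by
  classical
  -- `K` is the degree of `f` reduced mod `p`, so its coefficient there is a unit mod `p`.
  obtain ⟨j, hj⟩ : ∃ j, ¬ p ∣ f.coeff j := by
    by_contra! h
    exact hp.not_isUnit (hf p ((C_dvd_iff_dvd_coeff p f).mpr h))
  set K := Nat.findGreatest (fun j => ¬ p ∣ f.coeff j) f.natDegree
  have hKdeg : K ≤ f.natDegree := Nat.findGreatest_le _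
  have hK : ¬ p ∣ f.coeff K :=
    Nat.findGreatest_spec (P := fun j => ¬ p ∣ f.coeff j)
      (le_natDegree_of_ne_zero fun h => hj (h ▸ dvd_zero p)) hj
  refine ⟨K, hKdeg, ?_⟩
  set V := krylovSubmodule T x K ⊔ p • cyclicSubmodule T x
  have hterm : ∀ i ∈ (Finset.range (f.natDegree + 1)).erase K, f.coeff i • (T ^ i) x ∈ V := by
    intro i hi
    rcases lt_or_gt_of_ne (Finset.ne_of_mem_erase hi) with hlt | hgt
    · exact mem_sup_left (smul_mem _ _ (subset_span (mem_image_of_mem _ hlt)))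
    · have hideg : i ≤ f.natDegree :=
        Nat.lt_succ_iff.mp (Finset.mem_range.mp (Finset.mem_of_mem_erase hi))
      obtain ⟨c, hc⟩ := not_not.mp (Nat.findGreatest_is_greatest hgt hideg)
      rw [hc, mul_smul]
      exact mem_sup_right
        (smul_mem_pointwise_smul _ _ _ (smul_mem _ _ (subset_span (mem_range_self i))))
  have hKV : f.coeff K • (T ^ K) x ∈ V := by
    rw [aeval_eq_sum_range,
      ← Finset.add_sum_erase _ _ (Finset.mem_range.mpr (Nat.lt_succ_of_le hKdeg)),
      LinearMap.add_apply, LinearMap.sum_apply, add_eq_zero_iff_eq_neg] at hfx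
    rw [← LinearMap.smul_apply, hfx]
    exact neg_mem (sum_mem fun i hi => hterm i hi)
  obtain ⟨u, v, huv⟩ := hp.coprime_iff_not_dvd.mpr hK
  have hpV : p • (T ^ K) x ∈ V :=
    mem_sup_right (smul_mem_pointwise_smul _ _ _ (subset_span (mem_range_self K)))
  rw [← one_smul ℤ ((T ^ K) x), ← huv, add_smul, mul_smul, mul_smul]
  exact add_mem (smul_mem _ _ hpV) (smul_mem _ _ hKV)

theorem cyclicSubmodule_le_krylovSubmodule_sup_smul {f : ℤ[X]} (hf : f.IsPrimitive)
    (hfx : aeval T f x = 0) {p : ℤ} (hp : Prime p) :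
    cyclicSubmodule T x ≤ krylovSubmodule T x f.natDegree ⊔ p • cyclicSubmodule T x := by
  obtain ⟨K, hKdeg, hK⟩ := exists_pow_apply_mem_krylovSubmodule_sup_smul hf hfx hp
  have hN : p • cyclicSubmodule T x ≤ (p • cyclicSubmodule T x).comap T := by
    rintro _ ⟨y, hy, rfl⟩
    exact ⟨T y, by simpa using pow_apply_mem_cyclicSubmodule 1 hy, (map_zsmul T p y).symm⟩
  refine span_le.mpr (range_subset_iff.mpr fun m => ?_)
  have hle := sup_le_sup_right (krylovSubmodule_mono (T := T) (x := x) hKdeg)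
    (p • cyclicSubmodule T x)
  exact hle (pow_apply_mem_krylovSubmodule_sup hN hK m)

theorem cyclicSubmodule_le_krylovSubmodule_sup_smul_of_ne_zero {f : ℤ[X]} (hf : f.IsPrimitive)
    (hfx : aeval T f x = 0) {n : ℤ} (hn : n ≠ 0) :
    cyclicSubmodule T x ≤ krylovSubmodule T x f.natDegree ⊔ n • cyclicSubmodule T x := by
  induction n using UniqueFactorizationMonoid.induction_on_prime with
  | h₁ => exact absurd rfl hn
  | h₂ u hu =>
    intro y hy
    refine mem_sup_right ⟨u • y, smul_mem _ u hy, ?_⟩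
    simp [smul_smul, Int.isUnit_mul_self hu]
  | h₃ a p ha hp ih =>
    calc cyclicSubmodule T x
        ≤ krylovSubmodule T x f.natDegree ⊔ a • cyclicSubmodule T x := ih ha
      _ ≤ krylovSubmodule T x f.natDegree ⊔
            a • (krylovSubmodule T x f.natDegree ⊔ p • cyclicSubmodule T x) :=
          sup_le_sup_left (smul_mono_right a
            (cyclicSubmodule_le_krylovSubmodule_sup_smul hf hfx hp)) _
      _ ≤ krylovSubmodule T x f.natDegree ⊔ (p * a) • cyclicSubmodule T x := by
          rw [smul_sup', sup_le_iff, sup_le_iff, mul_comm, mul_smul]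
          exact ⟨le_sup_left, smul_le_self_of_tower a _ |>.trans le_sup_left, le_sup_right⟩

theorem finite_cyclicSubmodule {f : ℤ[X]} (hf : f.IsPrimitive) (hfx : aeval T f x = 0)
    (hx : IsOfFinAddOrder x) : (cyclicSubmodule T x : Set M).Finite := by
  obtain ⟨n, hn, hnx⟩ := isOfFinAddOrder_iff_zsmul_eq_zero.mp hx
  have hkill : ∀ y ∈ cyclicSubmodule T x, n • y = 0 := by
    intro y hy
    induction hy using span_induction with
    | mem y hy => obtain ⟨i, rfl⟩ := hy; rw [← map_zsmul, hnx, map_zero]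
    | zero => exact smul_zero n
    | add y z _ _ hy hz => rw [smul_add, hy, hz, add_zero]
    | smul c y _ hy => rw [smul_comm, hy, smul_zero]
  have hle : cyclicSubmodule T x ≤ krylovSubmodule T x f.natDegree := by
    have h := cyclicSubmodule_le_krylovSubmodule_sup_smul_of_ne_zero hf hfx hn
    have hbot : n • cyclicSubmodule T x = ⊥ :=
      eq_bot_iff.mpr (by rintro _ ⟨y, hy, rfl⟩; exact hkill y hy)
    rwa [hbot, sup_bot_eq] at h
  have : Module.Finite ℤ (krylovSubmodule T x f.natDegree) :=
    Module.Finite.span_of_finite ℤ ((finite_Iio _).image _)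
  have : Finite (krylovSubmodule T x f.natDegree) :=
    Module.finite_of_fg_torsion _ fun w => ⟨⟨n, mem_nonZeroDivisors_of_ne_zero hn⟩,
      Subtype.ext (hkill w (krylovSubmodule_le_cyclicSubmodule _ w.2))⟩
  exact (Set.toFinite _).subset hle

end Int

end Module.End

namespace NonUnitalSubring

open LinearMap (mulRight)
open Module.End

variable {R : Type*} [NonUnitalRing R]

theorem mul_mulRight_pow_apply (a y z : R) (m : ℕ) :
    y * (mulRight ℤ a ^ m) z = (mulRight ℤ a ^ m) (y * z) := by
  induction m with
  | zero => rfl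
  | succ m ih => simp only [pow_succ', mul_apply, LinearMap.mulRight_apply, ← mul_assoc, ih]

theorem mul_pow_mulRight_apply_self (a y : R) (m : ℕ) :
    y * (mulRight ℤ a ^ m) a = (mulRight ℤ a ^ (m + 1)) y := by
  rw [mul_mulRight_pow_apply, ← LinearMap.mulRight_apply ℤ, ← mul_apply, ← pow_succ]

theorem pow_mulRight_apply_mem_closure_singleton (a : R) (i : ℕ) :
    (mulRight ℤ a ^ i) a ∈ closure {a} := by
  induction i with
  | zero => exact subset_closure (Set.mem_singleton a)
  | succ i ih =>
    rw [pow_succ', mul_apply, LinearMap.mulRight_apply]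
    exact mul_mem ih (subset_closure (Set.mem_singleton a))

theorem mul_mem_cyclicSubmodule_mulRight {a x y : R}
    (hx : x ∈ cyclicSubmodule (mulRight ℤ a) a) (hy : y ∈ cyclicSubmodule (mulRight ℤ a) a) :
    x * y ∈ cyclicSubmodule (mulRight ℤ a) a := by
  induction hy using span_induction with
  | mem y hy =>
    obtain ⟨j, rfl⟩ := hy
    rw [mul_pow_mulRight_apply_self]
    exact pow_apply_mem_cyclicSubmodule _ hx
  | zero => rw [mul_zero]; exact zero_mem _
  | add y z _ _ hy hz => rw [mul_add]; exact add_mem hy hz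
  | smul c y _ hy => rw [mul_smul_comm]; exact smul_mem _ c hy

theorem coe_closure_singleton (a : R) :
    (closure {a} : Set R) = cyclicSubmodule (mulRight ℤ a) a := by
  ext x
  constructor
  · intro hx
    induction hx using closure_induction with
    | mem x hx => exact subset_span ⟨0, by simpa using hx.symm⟩
    | zero => exact zero_mem _
    | add x y _ _ hx hy => exact add_mem hx hy
    | neg x _ hx => exact neg_mem hx
    | mul x y _ _ hx hy => exact mul_mem_cyclicSubmodule_mulRight hx hy
  · intro hx
    induction hx using span_induction with
    | mem x hx => obtain ⟨i, rfl⟩ := hx; exact pow_mulRight_apply_mem_closure_singleton a i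
    | zero => exact zero_mem _
    | add x y _ _ hx hy => exact add_mem hx hy
    | smul c x _ hx => exact zsmul_mem hx c

theorem closure_singleton_le {a b : R} (hb : b ∈ closure {a}) : closure {b} ≤ closure {a} :=
  closure_le.mpr (Set.singleton_subset_iff.mpr hb)

theorem exists_eq_zsmul_add_mul_of_mem_closure_singleton {a x : R} (hx : x ∈ closure {a}) :
    ∃ n : ℤ, ∃ y ∈ closure {a}, x = n • a + y * a := by
  induction hx using closure_induction with
  | mem x hx => exact ⟨1, 0, zero_mem _, by simp [Set.mem_singleton_iff.mp hx]⟩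
  | zero => exact ⟨0, 0, zero_mem _, by simp⟩
  | add x x' _ _ hx hx' =>
    obtain ⟨n, y, hy, rfl⟩ := hx
    obtain ⟨n', y', hy', rfl⟩ := hx'
    exact ⟨n + n', y + y', add_mem hy hy', by rw [add_smul, add_mul]; abel⟩
  | neg x _ hx =>
    obtain ⟨n, y, hy, rfl⟩ := hx
    exact ⟨-n, -y, neg_mem hy, by rw [neg_smul, neg_mul, neg_add]⟩
  | mul x x' hx _ _ hx' =>
    obtain ⟨n', y', hy', rfl⟩ := hx'
    exact ⟨0, n' • x + x * y', add_mem (zsmul_mem hx n') (mul_mem hx hy'),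
      by rw [zero_smul, zero_add, add_mul, mul_add, smul_mul_assoc, mul_smul_comm, mul_assoc]⟩

theorem mul_eq_self_of_mem_closure_singleton {v d x : R} (hvd : v * d = d)
    (hx : x ∈ closure {d}) : v * x = x := by
  induction hx using closure_induction with
  | mem x hx => rwa [Set.mem_singleton_iff.mp hx]
  | zero => exact mul_zero v
  | add x y _ _ hx hy => rw [mul_add, hx, hy]
  | neg x _ hx => rw [mul_neg, hx]
  | mul x y _ _ hx _ => rw [← mul_assoc, hx]

theorem exists_eq_zsmul_of_mem_closure_singleton_zsmul {v x : R} (hv : IsIdempotentElem v)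
    {m : ℤ} (hx : x ∈ closure {m • v}) : ∃ k : ℤ, x = (k * m) • v := by
  induction hx using closure_induction with
  | mem x hx => exact ⟨1, by rw [Set.mem_singleton_iff.mp hx, one_mul]⟩
  | zero => exact ⟨0, by simp⟩
  | add x y _ _ hx hy =>
    obtain ⟨k, rfl⟩ := hx; obtain ⟨l, rfl⟩ := hy; exact ⟨k + l, by rw [add_mul, add_smul]⟩
  | neg x _ hx => obtain ⟨k, rfl⟩ := hx; exact ⟨-k, by rw [neg_mul, neg_smul]⟩
  | mul x y _ _ hx hy =>
    obtain ⟨k, rfl⟩ := hx; obtain ⟨l, rfl⟩ := hy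
    exact ⟨k * m * l, by rw [smul_mul_smul_comm, hv.eq]; ring_nf⟩

theorem infinite_range_closure_singleton_of_isIdempotentElem {v : R} (hv : IsIdempotentElem v)
    (hv' : ¬IsOfFinAddOrder v) : (range fun a : R => closure {a}).Infinite := by
  have hdvd : ∀ i j : ℤ, closure {i • v} = closure {j • v} → j ∣ i := by
    intro i j hij
    obtain ⟨k, hk⟩ := exists_eq_zsmul_of_mem_closure_singleton_zsmul hv
      (hij ▸ subset_closure rfl : i • v ∈ closure {j • v})
    by_contra hji
    refine hv' (isOfFinAddOrder_iff_zsmul_eq_zero.mpr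
      ⟨i - k * j, fun h => hji ⟨k, by linear_combination h⟩, by rw [sub_smul, hk, sub_self]⟩)
  refine infinite_of_injective_forall_mem (f := fun m : ℕ => closure {((m : ℤ) + 1) • v})
    (fun m₁ m₂ h => ?_) fun m => mem_range_self _
  have := Int.dvd_antisymm (by positivity) (by positivity) (hdvd _ _ h) (hdvd _ _ h.symm)
  omega

theorem exists_mul_eq_self_of_forall_mem_closure_zsmul {d : R}
    (hd : ∀ j : ℤ, j ≠ 0 → d ∈ closure {j • d}) : ∃ v ∈ closure {d}, v * d = d := by
  have hrel : ∀ j : ℤ, j ≠ 0 → ∃ n : ℤ, ∃ y ∈ closure {d}, (1 - n * j) • d = y * d := by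
    intro j hj
    obtain ⟨n, y, hy, hdy⟩ := exists_eq_zsmul_add_mul_of_mem_closure_singleton (hd j hj)
    have hjd : j • d ∈ closure {d} := zsmul_mem (subset_closure (Set.mem_singleton d)) j
    refine ⟨n, j • y, zsmul_mem (closure_singleton_le hjd hy) j, ?_⟩
    rw [sub_smul, one_smul, mul_smul, smul_mul_assoc, ← mul_smul_comm]
    nth_rewrite 1 [hdy]
    abel
  obtain ⟨n, y, hy, hny⟩ := hrel 2 two_ne_zero
  obtain ⟨n', y', hy', hny'⟩ := hrel (1 - n * 2) (by omega)
  -- `d = (1 - n' * N) • d + n' • N • d` with `N = 1 - n * 2 ≠ 0`.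
  refine ⟨y' + n' • y, add_mem hy' (zsmul_mem hy n'), ?_⟩
  rw [add_mul, smul_mul_assoc, ← hny, ← hny', smul_smul, ← add_smul, sub_add_cancel, one_smul]

theorem infinite_range_closure_singleton_of_not_isOfFinAddOrder {c : R}
    (hc : ¬IsOfFinAddOrder c) : (range fun a : R => closure {a}).Infinite := by
  intro hfin
  obtain ⟨j₀, hj₀, hmin⟩ := Set.Finite.exists_minimalFor' (fun j : ℤ => closure {j • c})
    {j | j ≠ 0} (hfin.subset (by rintro _ ⟨j, -, rfl⟩; exact mem_range_self _)) ⟨1, one_ne_zero⟩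
  set d := j₀ • c
  have hd : ∀ j : ℤ, j ≠ 0 → d ∈ closure {j • d} := by
    intro j hj
    have hjd : closure {(j * j₀) • c} ≤ closure {d} := by
      rw [mul_smul]
      exact closure_singleton_le (zsmul_mem (subset_closure (Set.mem_singleton d)) j)
    rw [← mul_smul]
    exact hmin (mul_ne_zero hj hj₀) hjd (subset_closure (Set.mem_singleton d))
  obtain ⟨v, hv, hvd⟩ := exists_mul_eq_self_of_forall_mem_closure_zsmul hd
  refine infinite_range_closure_singleton_of_isIdempotentElem
    (mul_eq_self_of_mem_closure_singleton hvd hv) (fun hv' => hc ?_) hfin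
  obtain ⟨z, hz, hzv⟩ := isOfFinAddOrder_iff_zsmul_eq_zero.mp hv'
  refine isOfFinAddOrder_iff_zsmul_eq_zero.mpr ⟨z * j₀, mul_ne_zero hz hj₀, ?_⟩
  rw [mul_smul]
  change z • d = 0
  rw [← hvd, ← smul_mul_assoc, hzv, zero_mul]

theorem finite_closure_singleton_of_mem_closure_pow {a : R} (ha : IsOfFinAddOrder a) {k l : ℕ}
    (h : (mulRight ℤ a ^ k) a ∈ closure {(mulRight ℤ a ^ (k + l + 1)) a}) :
    (closure {a} : Set R).Finite := by
  set T := mulRight ℤ a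
  obtain ⟨m, y, hy, hxy⟩ := exists_eq_zsmul_add_mul_of_mem_closure_singleton h
  have hy' : y ∈ cyclicSubmodule T a := by
    rw [← SetLike.mem_coe, ← coe_closure_singleton]
    exact closure_singleton_le (pow_mulRight_apply_mem_closure_singleton a _) hy
  obtain ⟨g, rfl⟩ := exists_aeval_apply_eq_of_mem_cyclicSubmodule hy'
  set f : ℤ[X] := X ^ k - C m * X ^ (k + l + 1) - X ^ (k + l + 2) * g
  have hf : f.coeff k = 1 := by
    simp [f, coeff_X_pow, coeff_X_pow_mul', show k ≠ k + l + 1 by omega,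
      show ¬k + l + 2 ≤ k by omega]
  have hfa : aeval T f a = 0 := by
    simp only [f, map_sub, map_mul, map_pow, aeval_X, aeval_C, LinearMap.sub_apply, mul_apply,
      Module.algebraMap_end_apply, sub_eq_zero]
    rw [← mul_pow_mulRight_apply_self a _ (k + l + 1), hxy, add_sub_cancel_left]
  rw [coe_closure_singleton]
  exact finite_cyclicSubmodule
    (fun r hr => isUnit_of_dvd_one (hf ▸ (C_dvd_iff_dvd_coeff r f).mp hr k)) hfa ha

theorem infinite_range_closure_singleton_of_isOfFinAddOrder {a : R} (ha : IsOfFinAddOrder a)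
    (hinf : (closure {a} : Set R).Infinite) : (range fun b : R => closure {b}).Infinite := by
  intro hfin
  obtain ⟨k, k', hkk', heq⟩ := hfin.exists_lt_map_eq_of_forall_mem
    (f := fun k => closure {(mulRight ℤ a ^ k) a})
    fun k => mem_range_self (f := fun b => closure {b}) _
  obtain ⟨l, rfl⟩ := Nat.exists_eq_add_of_lt hkk'
  refine hinf (finite_closure_singleton_of_mem_closure_pow ha (k := k) (l := l) ?_)
  rw [← heq]
  exact subset_closure (Set.mem_singleton _)

theorem infinite_range_closure_singleton [Infinite R] :
    (range fun a : R => closure {a}).Infinite := by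
  by_cases h : ∀ c : R, IsOfFinAddOrder c
  swap
  · obtain ⟨c, hc⟩ := not_forall.mp h
    exact infinite_range_closure_singleton_of_not_isOfFinAddOrder hc
  intro hfin
  obtain ⟨a, ha⟩ : ∃ a : R, (closure {a} : Set R).Infinite := by
    by_contra! hall
    refine infinite_univ ((hfin.biUnion ?_).subset fun x _ =>
      mem_biUnion (mem_range_self x) (subset_closure (Set.mem_singleton x)))
    rintro _ ⟨a, rfl⟩
    exact hall a
  exact infinite_range_closure_singleton_of_isOfFinAddOrder (h a) ha hfin

theorem countable_closure_singleton (a : R) : (closure {a} : Set R).Countable := by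
  have : Countable (span ℤ (range fun i => (mulRight ℤ a ^ i) a)) := inferInstance
  rw [coe_closure_singleton]
  exact countable_coe_iff.mp this

theorem mk_range_closure_singleton [Infinite R] :
    #(range fun a : R => closure {a}) = #R := by
  have := infinite_range_closure_singleton (R := R) |>.to_subtype
  refine le_antisymm mk_range_le ?_
  calc #R ≤ #(range fun a : R => closure {a}) * ℵ₀ := by
        refine mk_le_mk_mul_of_mk_preimage_le (rangeFactorization _) fun ⟨_, b, rfl⟩ => ?_
        refine (mk_le_mk_of_subset fun a ha => ?_).trans (countable_closure_singleton b).le_aleph0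
        rw [← show closure {a} = closure {b} from congrArg Subtype.val ha]
        exact subset_closure (Set.mem_singleton a)
    _ = #(range fun a : R => closure {a}) := mul_aleph0_eq (aleph0_le_mk _)

end NonUnitalSubring

/-- If `R` is an infinite (possibly nonunital) ring, then the number of one-generated
subrings of `R` equals the cardinality of `R`. -/
theorem stmt_2 (R : Type*) [NonUnitalRing R] [Infinite R] :
    #{S : NonUnitalSubring R | ∃ a : R, S = NonUnitalSubring.closure {a}} = #R := by
  have hS : {S : NonUnitalSubring R | ∃ a : R, S = NonUnitalSubring.closure {a}} =
      range fun a => NonUnitalSubring.closure {a} :=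
    ext fun _ => exists_congr fun _ => eq_comm
  rw [hS, NonUnitalSubring.mk_range_closure_singleton]
end

section
/- Every infinite (possibly nonunital) ring R has infinitely many subrings generated by one element, i.e., the set {S : S is a subring of R and S = ⟨a⟩ for some a ∈ R} is infinite. -/
/-!
Suppose `R` has only finitely many one-generated subrings. As `R` is the union of them, some `⟨c⟩`
is infinite. Replacing `R` by the unitization `B` of the commutative ring `⟨c⟩`, we get a
commutative ring `B = ℤ[c]` in which `⟨c⟩ = cB` and `⟨a⟩ = {a q(a) : q ∈ ℤ[X]}`.

Pigeonholing the families `⟨n x⟩` and `⟨xⁿ⟩` shows that every `x ∈ cB` is torsion: from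
`xⁿ ∈ xⁿ⁺¹B` one builds an idempotent `e` with `e xⁿ = xⁿ`; the family `⟨n e⟩ = nℤe` forces `e`
to be torsion, and `x - e x` is nilpotent with `M (x - e x) ∈ (x - e x)² B` for some `M ≠ 0`, hence
torsion too. So `K • cB = 0` for some `K > 0`.

If for some prime `p` every integer relation between the powers of `c` vanishes mod `p`, the
subrings `⟨cⁿ⁺¹⟩` are pairwise distinct. Otherwise, for every prime `p`, a relation that survives
mod `p` shows that `B` is spanned by finitely many powers of `c` modulo `pB`; a `K`-torsion group
`N` with `N ⊆ (finite set) + pN` for all primes `p ∣ K` is finite, so `cB` would be finite.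
-/

open Polynomial NonUnitalSubring Pointwise

section AddCommGroup

variable {M : Type*} [AddCommGroup M]

theorem Submodule.finite_span_of_nsmul_eq_zero {s : Set M} (hs : s.Finite) {K : ℕ} (hK : 0 < K)
    (h : ∀ x ∈ s, K • x = 0) : (span ℤ s : Set M).Finite := by
  have : Module.Finite ℤ (span ℤ s) := Module.Finite.span_of_finite ℤ hs
  have : AddGroup.FG (span ℤ s) := Module.Finite.iff_addGroup_fg.1 this
  have htors : ∀ x ∈ span ℤ s, K • x = 0 := fun x hx ↦ by
    simpa using (mem_torsionBy_iff _ _).1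
      (span_le.2 (fun y hy ↦ (mem_torsionBy_iff _ _).2 (by simpa using h y hy)) hx :
        x ∈ torsionBy ℤ M K)
  have : Finite (span ℤ s) := AddCommGroup.finite_of_fg_isAddTorsion _ fun x ↦
    isOfFinAddOrder_iff_nsmul_eq_zero.2 ⟨K, hK, Subtype.ext (htors x x.2)⟩
  exact Set.toFinite (span ℤ s : Set M)

theorem finite_of_forall_prime_subset_add_nsmul {K : ℕ} (hK : 0 < K) {N : Set M}
    (htors : ∀ x ∈ N, K • x = 0)
    (hsplit : ∀ p, p.Prime → p ∣ K → ∃ G : Set M, G.Finite ∧ N ⊆ G + (p • ·) '' N) :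
    N.Finite := by
  induction K using Nat.strong_induction_on generalizing N with
  | _ K ih =>
  rcases eq_or_ne K 1 with rfl | hK1
  · exact (Set.finite_singleton 0).subset fun x hx ↦ by simpa using htors x hx
  have hp := Nat.minFac_prime hK1
  obtain ⟨K', hK'⟩ := Nat.minFac_dvd K
  have hK'pos : 0 < K' := Nat.pos_of_mul_pos_left (hK' ▸ hK)
  have hK'lt : K' < K := hK' ▸ lt_mul_left hK'pos hp.one_lt
  obtain ⟨G, hG, hNG⟩ := hsplit _ hp (Nat.minFac_dvd K)
  refine (hG.add (ih K' hK'lt hK'pos (N := (K.minFac • ·) '' N) ?_ fun q hq hqK' ↦ ?_)).subset hNG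
  · rintro _ ⟨y, hy, rfl⟩
    rw [smul_smul, mul_comm, ← hK', htors y hy]
  · obtain ⟨G', hG', hNG'⟩ := hsplit q hq (hK' ▸ dvd_mul_of_dvd_right hqK' _)
    refine ⟨(K.minFac • ·) '' G', hG'.image _, ?_⟩
    rintro _ ⟨y, hy, rfl⟩
    obtain ⟨g, hg, _, ⟨z, hz, rfl⟩, rfl⟩ := hNG' hy
    simp only [smul_add, smul_comm K.minFac q]
    exact Set.add_mem_add (Set.mem_image_of_mem _ hg)
      (Set.mem_image_of_mem _ (Set.mem_image_of_mem _ hz))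

end AddCommGroup

theorem Int.sub_mul_ne_zero_of_lt {m n : ℕ} (h : m < n) (k : ℤ) :
    (m + 1 : ℤ) - k * (n + 1) ≠ 0 := by
  intro h0
  have : (n + 1 : ℤ) ≤ m + 1 := Int.le_of_dvd (by positivity) ⟨k, by linarith⟩
  omega

section NonUnitalRing

variable {R S : Type*} [NonUnitalRing R] [NonUnitalRing S]

theorem closure_singleton_subset_zmultiples {a : R} {k : ℤ} (h : a * a = k • a) :
    (closure {a} : Set R) ⊆ AddSubgroup.zmultiples a := by
  intro x hx
  induction hx using closure_induction with
  | mem x hx => exact ⟨1, by simp [Set.mem_singleton_iff.1 hx]⟩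
  | zero => exact zero_mem _
  | add x y _ _ hx hy => exact add_mem hx hy
  | neg x _ hx => exact neg_mem hx
  | mul x y _ _ hx hy =>
    obtain ⟨m, rfl⟩ := hx
    obtain ⟨n, rfl⟩ := hy
    exact ⟨m * n * k, by rw [smul_mul_smul_comm, h, smul_smul]⟩

theorem image_closure_singleton_image (f : R →ₙ+* S) (s : Set R) :
    (fun b : S ↦ closure {b}) '' (f '' s) = map f '' ((fun a : R ↦ closure {a}) '' s) := by
  simp only [Set.image_image, NonUnitalRingHom.map_closure, Set.image_singleton]

theorem NonUnitalSubring.map_injective {f : R →ₙ+* S} (hf : Function.Injective f) :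
    Function.Injective (map f) := fun _ _ h ↦
  SetLike.coe_injective <| Set.image_injective.2 hf <| by
    simpa only [coe_map] using congrArg SetLike.coe h

end NonUnitalRing

section CommRing

variable {B : Type*} [CommRing B]

theorem exists_aeval_X_mul_eq_of_mem_closure {a x : B} (hx : x ∈ closure {a}) :
    ∃ q : ℤ[X], aeval a (X * q) = x := by
  induction hx using closure_induction with
  | mem x hx => exact ⟨1, by simp [Set.mem_singleton_iff.1 hx]⟩
  | zero => exact ⟨0, by simp⟩
  | add x y _ _ hx hy =>
    obtain ⟨q, rfl⟩ := hx
    obtain ⟨r, rfl⟩ := hy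
    exact ⟨q + r, by rw [mul_add, map_add]⟩
  | neg x _ hx =>
    obtain ⟨q, rfl⟩ := hx
    exact ⟨-q, by rw [mul_neg, map_neg]⟩
  | mul x y _ _ hx hy =>
    obtain ⟨q, rfl⟩ := hx
    obtain ⟨r, rfl⟩ := hy
    exact ⟨X * q * r, by simp only [map_mul]; ring⟩

theorem closure_singleton_subset_span_singleton (a : B) :
    (closure {a} : Set B) ⊆ Ideal.span {a} := by
  rintro _ hx
  obtain ⟨q, rfl⟩ := exists_aeval_X_mul_eq_of_mem_closure hx
  exact Ideal.mem_span_singleton'.2 ⟨aeval a q, by rw [map_mul, aeval_X, mul_comm]⟩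

theorem exists_sub_zsmul_mem_span_sq_of_mem_closure {a x : B} (hx : x ∈ closure {a}) :
    ∃ k : ℤ, x - k • a ∈ Ideal.span {a ^ 2} := by
  obtain ⟨q, rfl⟩ := exists_aeval_X_mul_eq_of_mem_closure hx
  have hq : aeval a q = a * aeval a q.divX + q.coeff 0 := by
    conv_lhs => rw [← X_mul_divX_add q]
    simp
  refine ⟨q.coeff 0, Ideal.mem_span_singleton'.2 ⟨aeval a q.divX, ?_⟩⟩
  simp only [map_mul, aeval_X, hq, zsmul_eq_mul]
  ring

theorem isIdempotentElem_pow_mul_of_pow_eq {x y : B} {n : ℕ} (h : x ^ n = x ^ (n + 1) * y) :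
    IsIdempotentElem ((x * y) ^ n) ∧ (x * y) ^ n * x ^ n = x ^ n := by
  have hiter : ∀ k, x ^ n = x ^ (n + k) * y ^ k := by
    intro k
    induction k with
    | zero => simp
    | succ k ih =>
      calc x ^ n = x ^ k * y ^ k * x ^ n := by
            conv_lhs => rw [ih]
            ring
        _ = x ^ (n + (k + 1)) * y ^ (k + 1) := by rw [h]; ring
  have hfix : (x * y) ^ n * x ^ n = x ^ n := by
    calc (x * y) ^ n * x ^ n = x ^ (n + n) * y ^ n := by ring
      _ = x ^ n := (hiter n).symm
  refine ⟨?_, hfix⟩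
  calc (x * y) ^ n * (x * y) ^ n = (x * y) ^ n * x ^ n * y ^ n := by ring
    _ = (x * y) ^ n := by rw [hfix, mul_pow]

theorem pow_zsmul_eq_zero_of_zsmul_mem_span_sq {x : B} {M : ℤ} {n : ℕ}
    (hM : M • x ∈ Ideal.span {x ^ 2}) (hx : x ^ n = 0) : M ^ n • x = 0 := by
  obtain ⟨y, hy⟩ := Ideal.mem_span_singleton'.1 hM
  have hiter : ∀ k, M ^ k • x = x ^ (k + 1) * y ^ k := by
    intro k
    induction k with
    | zero => simp
    | succ k ih =>
      calc M ^ (k + 1) • x = x ^ k * y ^ k * (M • x) := by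
            rw [pow_succ', mul_smul, ih, mul_smul_comm]; ring
        _ = x ^ (k + 1 + 1) * y ^ (k + 1) := by rw [← hy]; ring
  rw [hiter, pow_succ, hx, zero_mul, zero_mul]

section Pigeonhole

variable {I : Ideal B}

theorem exists_lt_mem_closure_of_finite
    (hfin : ((fun a : B ↦ closure {a}) '' (I : Set B)).Finite) (f : ℕ → B) (hf : ∀ n, f n ∈ I) :
    ∃ m n, m < n ∧ f m ∈ closure {f n} := by
  obtain ⟨m, n, hmn, h⟩ := hfin.exists_lt_map_eq_of_forall_mem (f := fun n ↦ closure {f n})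
    fun n ↦ Set.mem_image_of_mem (fun a : B ↦ closure {a}) (hf n)
  exact ⟨m, n, hmn, h ▸ subset_closure rfl⟩

theorem exists_zsmul_mem_span_sq_of_finite
    (hfin : ((fun a : B ↦ closure {a}) '' (I : Set B)).Finite) {x : B} (hx : x ∈ I) :
    ∃ M : ℤ, M ≠ 0 ∧ M • x ∈ Ideal.span {x ^ 2} := by
  obtain ⟨m, n, hmn, hmem⟩ := exists_lt_mem_closure_of_finite hfin
    (fun n : ℕ ↦ (n + 1 : ℤ) • x) fun n ↦ by simpa [zsmul_eq_mul] using I.mul_mem_left _ hx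
  obtain ⟨k, hk⟩ := exists_sub_zsmul_mem_span_sq_of_mem_closure hmem
  refine ⟨m + 1 - k * (n + 1), Int.sub_mul_ne_zero_of_lt hmn k, ?_⟩
  have hle : Ideal.span {((n + 1 : ℤ) • x) ^ 2} ≤ Ideal.span {x ^ 2} :=
    Ideal.span_singleton_le_span_singleton.2
      ⟨(n + 1) ^ 2, by simp only [zsmul_eq_mul]; push_cast; ring⟩
  simpa [sub_smul, mul_smul] using hle hk

theorem exists_pow_eq_pow_succ_mul_of_finite
    (hfin : ((fun a : B ↦ closure {a}) '' (I : Set B)).Finite) {x : B} (hx : x ∈ I) :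
    ∃ (n : ℕ) (y : B), x ^ (n + 1) = x ^ (n + 1 + 1) * y := by
  obtain ⟨m, n, hmn, hmem⟩ := exists_lt_mem_closure_of_finite hfin (fun n ↦ x ^ (n + 1))
    fun n ↦ I.pow_mem_of_mem hx _ n.succ_pos
  have hle : Ideal.span {x ^ (n + 1)} ≤ Ideal.span {x ^ (m + 1 + 1)} :=
    Ideal.span_singleton_le_span_singleton.2 (pow_dvd_pow x (by omega))
  obtain ⟨y, hy⟩ :=
    Ideal.mem_span_singleton.1 (hle (closure_singleton_subset_span_singleton _ hmem))
  exact ⟨m, y, hy⟩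

theorem IsIdempotentElem.isOfFinAddOrder_of_finite
    (hfin : ((fun a : B ↦ closure {a}) '' (I : Set B)).Finite) {e : B} (he : IsIdempotentElem e)
    (heI : e ∈ I) : IsOfFinAddOrder e := by
  obtain ⟨m, n, hmn, hmem⟩ := exists_lt_mem_closure_of_finite hfin
    (fun n : ℕ ↦ (n + 1 : ℤ) • e) fun n ↦ by simpa [zsmul_eq_mul] using I.mul_mem_left _ heI
  have hsq : ((n + 1 : ℤ) • e) * ((n + 1 : ℤ) • e) = (n + 1 : ℤ) • ((n + 1 : ℤ) • e) := by
    rw [smul_mul_smul_comm, he.eq, smul_smul]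
  obtain ⟨k, hk : k • (n + 1 : ℤ) • e = (m + 1 : ℤ) • e⟩ :=
    closure_singleton_subset_zmultiples hsq hmem
  refine isOfFinAddOrder_iff_zsmul_eq_zero.2
    ⟨m + 1 - k * (n + 1), Int.sub_mul_ne_zero_of_lt hmn k, ?_⟩
  rw [sub_smul, mul_smul, hk, sub_self]

theorem isOfFinAddOrder_of_mem_of_finite
    (hfin : ((fun a : B ↦ closure {a}) '' (I : Set B)).Finite) {x : B} (hx : x ∈ I) :
    IsOfFinAddOrder x := by
  obtain ⟨n, y, hxy⟩ := exists_pow_eq_pow_succ_mul_of_finite hfin hx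
  obtain ⟨he, hex⟩ := isIdempotentElem_pow_mul_of_pow_eq hxy
  set e := (x * y) ^ (n + 1)
  have heI : e ∈ I := I.pow_mem_of_mem (I.mul_mem_right y hx) _ n.succ_pos
  have hnil : (x - e * x) ^ (n + 1) = 0 := by
    rw [show x - e * x = (1 - e) * x by ring, mul_pow, he.one_sub.pow_succ_eq, sub_mul, one_mul,
      hex, sub_self]
  obtain ⟨M, hM, hMx⟩ :=
    exists_zsmul_mem_span_sq_of_finite hfin (I.sub_mem hx (I.mul_mem_left e hx))
  obtain ⟨χ, hχ, hχe⟩ :=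
    isOfFinAddOrder_iff_zsmul_eq_zero.1 (he.isOfFinAddOrder_of_finite hfin heI)
  refine isOfFinAddOrder_iff_zsmul_eq_zero.2
    ⟨χ * M ^ (n + 1), mul_ne_zero hχ (pow_ne_zero _ hM), ?_⟩
  calc (χ * M ^ (n + 1)) • x
      = M ^ (n + 1) • ((χ • e) * x) + χ • (M ^ (n + 1) • (x - e * x)) := by
        simp only [zsmul_eq_mul, Int.cast_mul, Int.cast_pow]; ring
    _ = 0 := by rw [hχe, pow_zsmul_eq_zero_of_zsmul_mem_span_sq hMx hnil]; simp

end Pigeonhole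

theorem pow_succ_notMem_closure_pow_succ {c : B} {p : ℕ} [Fact p.Prime]
    (hrel : ∀ f : ℤ[X], aeval c f = 0 → f.map (Int.castRingHom (ZMod p)) = 0) {k l : ℕ}
    (hkl : k < l) : c ^ (k + 1) ∉ closure {c ^ (l + 1)} := by
  intro hmem
  obtain ⟨q, hq⟩ := exists_aeval_X_mul_eq_of_mem_closure hmem
  -- the relation `X ^ (k + 1) - (X * q) ∘ X ^ (l + 1)` has coefficient `1` at `k + 1`
  have hf := congrArg (coeff · (k + 1)) (hrel (X ^ (k + 1) - (X * q).comp (X ^ (l + 1)))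
    (by simp only [map_sub, aeval_comp, map_pow, aeval_X, hq, sub_self]))
  simp [coeff_X_pow_mul', coeff_X_pow, not_le.2 hkl] at hf

theorem pow_mem_span_pow_sup_of_pow_mem {c : B} {J : Ideal B} {d : ℕ}
    (hd : c ^ d ∈ Submodule.span ℤ ((c ^ ·) '' Set.Iio d) ⊔ J.restrictScalars ℤ) (j : ℕ) :
    c ^ j ∈ Submodule.span ℤ ((c ^ ·) '' Set.Iio d) ⊔ J.restrictScalars ℤ := by
  set W := Submodule.span ℤ ((c ^ ·) '' Set.Iio d) ⊔ J.restrictScalars ℤ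
  have hstable : ∀ w ∈ W, c * w ∈ W := by
    intro w hw
    obtain ⟨s, hs, t, ht, rfl⟩ := Submodule.mem_sup.1 hw
    rw [mul_add]
    refine add_mem ?_ (Submodule.mem_sup_right (J.mul_mem_left c ht))
    clear hw ht
    induction hs using Submodule.span_induction with
    | mem x hx =>
      obtain ⟨i, hi, rfl⟩ := hx
      rw [← pow_succ']
      rcases (Nat.succ_le_of_lt hi).lt_or_eq with h | h
      · exact Submodule.mem_sup_left (Submodule.subset_span ⟨i + 1, h, rfl⟩)
      · rwa [← h] at hd
    | zero => simp
    | add x y _ _ hx hy => rw [mul_add]; exact add_mem hx hy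
    | smul k x _ hx => rw [mul_smul_comm]; exact W.smul_mem k hx
  induction j with
  | zero =>
    rcases Nat.eq_zero_or_pos d with rfl | h
    · exact hd
    · exact Submodule.mem_sup_left (Submodule.subset_span ⟨0, h, rfl⟩)
  | succ j ih => rw [pow_succ']; exact hstable _ ih

theorem exists_pow_mem_span_pow_sup_span_natCast {c : B} {f : ℤ[X]} {p : ℕ} (hp : p.Prime)
    (hf : aeval c f = 0) (hfp : f.map (Int.castRingHom (ZMod p)) ≠ 0) :
    ∃ d, c ^ d ∈ Submodule.span ℤ ((c ^ ·) '' Set.Iio d) ⊔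
      (Ideal.span {(p : B)}).restrictScalars ℤ := by
  classical
  set d := (f.map (Int.castRingHom (ZMod p))).natDegree
  set W := Submodule.span ℤ ((c ^ ·) '' Set.Iio d) ⊔ (Ideal.span {(p : B)}).restrictScalars ℤ
  have hdvd : ∀ i, (f.coeff i : ZMod p) = 0 ↔ (p : ℤ) ∣ f.coeff i := fun i ↦
    ZMod.intCast_zmod_eq_zero_iff_dvd _ _
  have hlead : ¬ (p : ℤ) ∣ f.coeff d := by
    have := leadingCoeff_ne_zero.2 hfp
    rw [leadingCoeff, coeff_map, eq_intCast] at this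
    exact fun h ↦ this ((hdvd _).2 h)
  set rest := ∑ i ∈ (Finset.range (f.natDegree + 1)).erase d, f.coeff i • c ^ i
  have hrest : rest ∈ W := by
    refine Submodule.sum_mem _ fun i hi ↦ ?_
    rcases lt_or_gt_of_ne (Finset.ne_of_mem_erase hi) with h | h
    · exact W.smul_mem _ (Submodule.mem_sup_left (Submodule.subset_span ⟨i, h, rfl⟩))
    · obtain ⟨a, ha⟩ := (hdvd i).1 (by simpa [coeff_map] using coeff_eq_zero_of_natDegree_lt h)
      refine Submodule.mem_sup_right (Ideal.mem_span_singleton'.2 ⟨a • c ^ i, ?_⟩)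
      rw [ha, zsmul_eq_mul, zsmul_eq_mul]
      push_cast
      ring
  have hsum : f.coeff d • c ^ d + rest = 0 := by
    rw [Finset.add_sum_erase _ (fun i ↦ f.coeff i • c ^ i)
      (Finset.mem_range_succ_iff.2 natDegree_map_le), ← aeval_eq_sum_range, hf]
  obtain ⟨a, b, hab⟩ := ((Nat.prime_iff_prime_int.1 hp).coprime_iff_not_dvd).2 hlead
  have hcd : c ^ d = a • ((p : B) * c ^ d) - b • rest := by
    calc c ^ d = (a * p + b * f.coeff d) • c ^ d := by rw [hab, one_smul]
      _ = a • ((p : B) * c ^ d) + b • (f.coeff d • c ^ d) := by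
          rw [add_smul, mul_smul, mul_smul, natCast_zsmul, nsmul_eq_mul]
      _ = _ := by rw [eq_neg_of_add_eq_zero_left hsum, smul_neg, ← sub_eq_add_neg]
  refine ⟨d, hcd ▸ sub_mem (W.smul_mem a (Submodule.mem_sup_right ?_)) (W.smul_mem b hrest)⟩
  exact Ideal.mul_mem_right _ _ (Ideal.mem_span_singleton_self _)

theorem span_singleton_subset_add_nsmul {c : B} (hgen : Function.Surjective (aeval c : ℤ[X] → B))
    {p d : ℕ} (hpow : ∀ j, c ^ j ∈
      Submodule.span ℤ ((c ^ ·) '' Set.Iio d) ⊔ (Ideal.span {(p : B)}).restrictScalars ℤ) :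
    (Ideal.span {c} : Set B) ⊆ (Submodule.span ℤ ((fun i ↦ c ^ (i + 1)) '' Set.Iio d) : Set B) +
      (p • ·) '' Ideal.span {c} := by
  intro x hx
  obtain ⟨z, rfl⟩ := Ideal.mem_span_singleton'.1 hx
  obtain ⟨q, rfl⟩ := hgen z
  have hq : aeval c q ∈
      Submodule.span ℤ ((c ^ ·) '' Set.Iio d) ⊔ (Ideal.span {(p : B)}).restrictScalars ℤ := by
    rw [aeval_eq_sum_range]
    exact Submodule.sum_mem _ fun i _ ↦ Submodule.smul_mem _ _ (hpow i)
  obtain ⟨g, hg, t, ht, hgt⟩ := Submodule.mem_sup.1 hq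
  obtain ⟨y, rfl⟩ := Ideal.mem_span_singleton'.1 ht
  refine ⟨g * c, ?_, p • (y * c), ⟨y * c, Ideal.mem_span_singleton'.2 ⟨y, rfl⟩, rfl⟩, ?_⟩
  · have := Submodule.mem_map_of_mem (f := LinearMap.mulRight ℤ c) hg
    simpa [Submodule.map_span, Set.image_image, ← pow_succ] using this
  · rw [← hgt, nsmul_eq_mul]
    ring

theorem infinite_image_closure_singleton_span {c : B}
    (hgen : Function.Surjective (aeval c : ℤ[X] → B)) (hinf : (Ideal.span {c} : Set B).Infinite) :
    ((fun a : B ↦ closure {a}) '' (Ideal.span {c} : Set B)).Infinite := by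
  intro hfin
  obtain ⟨K, hK, hKc⟩ := isOfFinAddOrder_iff_nsmul_eq_zero.1
    (isOfFinAddOrder_of_mem_of_finite hfin (Ideal.mem_span_singleton_self c))
  by_cases hrel : ∃ p, p.Prime ∧ ∀ f : ℤ[X], aeval c f = 0 → f.map (Int.castRingHom (ZMod p)) = 0
  · obtain ⟨p, hp, hrel⟩ := hrel
    have := Fact.mk hp
    refine Set.infinite_of_injective_forall_mem (f := fun n : ℕ ↦ closure {c ^ (n + 1)})
      (fun k l (h : closure {c ^ (k + 1)} = closure {c ^ (l + 1)}) ↦ ?_)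
      (fun n ↦ Set.mem_image_of_mem (fun a : B ↦ closure {a})
        (Ideal.mem_span_singleton.2 (dvd_pow_self c n.succ_ne_zero))) hfin
    rcases lt_trichotomy k l with hkl | rfl | hkl
    · exact absurd (h ▸ subset_closure rfl) (pow_succ_notMem_closure_pow_succ hrel hkl)
    · rfl
    · exact absurd (h.symm ▸ subset_closure rfl) (pow_succ_notMem_closure_pow_succ hrel hkl)
  push Not at hrel
  refine hinf (finite_of_forall_prime_subset_add_nsmul hK (fun x hx ↦ ?_) fun p hp _ ↦ ?_)
  · obtain ⟨y, rfl⟩ := Ideal.mem_span_singleton'.1 hx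
    rw [← mul_smul_comm, hKc, mul_zero]
  obtain ⟨f, hf, hfp⟩ := hrel p hp
  obtain ⟨d, hd⟩ := exists_pow_mem_span_pow_sup_span_natCast hp hf hfp
  refine ⟨_, Submodule.finite_span_of_nsmul_eq_zero ((Set.finite_Iio d).image _) hK ?_,
    span_singleton_subset_add_nsmul hgen (pow_mem_span_pow_sup_of_pow_mem hd)⟩
  rintro _ ⟨i, -, rfl⟩
  show K • c ^ (i + 1) = 0
  rw [pow_succ, ← mul_smul_comm, hKc, mul_zero]

end CommRing

theorem infinite_range_closure_singleton_of_closure_eq_top {A : Type*} [NonUnitalCommRing A]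
    [Infinite A] {c : A} (hc : closure {c} = ⊤) :
    (Set.range fun a : A ↦ closure {a}).Infinite := by
  let ι : A →ₙ+* Unitization ℤ A := Unitization.inrNonUnitalAlgHom ℤ A
  have hrange : (closure {ι c} : Set (Unitization ℤ A)) = Set.range ι := by
    rw [← Set.image_singleton, ← NonUnitalRingHom.map_closure, hc, coe_map, coe_top,
      Set.image_univ]
  have hspan : (Ideal.span {ι c} : Set (Unitization ℤ A)) = Set.range ι := by
    refine subset_antisymm (fun x hx ↦ ?_) (hrange ▸ closure_singleton_subset_span_singleton _)
    obtain ⟨y, rfl⟩ := Ideal.mem_span_singleton'.1 hx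
    refine ⟨y.fst • c + y.snd * c, ?_⟩
    change ((y.fst • c + y.snd * c : A) : Unitization ℤ A) = y * (c : Unitization ℤ A)
    rw [Unitization.inr_add, Unitization.inr_mul, ← Unitization.inl_mul_inr, ← add_mul,
      Unitization.inl_fst_add_inr_snd_eq]
  have hinf := infinite_image_closure_singleton_span (c := ι c) (fun z ↦ ?_)
    (by rw [hspan]; exact Set.infinite_range_of_injective (f := ι) Unitization.inr_injective)
  · rw [hspan, ← Set.image_univ, image_closure_singleton_image, Set.image_univ] at hinf
    exact hinf.of_image _
  obtain ⟨q, hq⟩ := exists_aeval_X_mul_eq_of_mem_closure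
    (hrange.symm ▸ Set.mem_range_self z.snd : ι z.snd ∈ (closure {ι c} : Set (Unitization ℤ A)))
  refine ⟨(z.fst : ℤ[X]) + X * q, ?_⟩
  rw [map_add, map_intCast, hq, ← Int.cast_id (n := z.fst),
    ← map_intCast (Unitization.inlRingHom ℤ A)]
  exact Unitization.inl_fst_add_inr_snd_eq z

open scoped IsMulCommutative in
theorem infinite_image_closure_singleton_closure {R : Type*} [NonUnitalRing R] {c : R}
    (hc : (closure {c} : Set R).Infinite) :
    ((fun a : R ↦ closure {a}) '' (closure {c} : Set R)).Infinite := by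
  have := isMulCommutative_closure (s := {c}) (by simp)
  have : Infinite (closure {c}) := hc.to_subtype
  let ι := NonUnitalSubringClass.subtype (closure {c})
  have hι : Function.Injective ι := Subtype.val_injective
  have hc' : closure {(⟨c, subset_closure rfl⟩ : closure {c})} = ⊤ := by
    refine map_injective hι ?_
    rw [NonUnitalRingHom.map_closure, Set.image_singleton, ← NonUnitalRingHom.range_eq_map,
      range_subtype]
    rfl
  have hrange : (closure {c} : Set R) = ι '' Set.univ := by
    rw [Set.image_univ]
    exact (congrArg SetLike.coe (range_subtype _)).symm
  rw [hrange, image_closure_singleton_image, Set.image_univ]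
  exact (infinite_range_closure_singleton_of_closure_eq_top hc').image (map_injective hι).injOn

/-- Every infinite (possibly nonunital) ring has infinitely many subrings generated by
one element. -/
theorem stmt_3 (R : Type*) [NonUnitalRing R] [Infinite R] :
    {S : NonUnitalSubring R | ∃ a : R, S = NonUnitalSubring.closure {a}}.Infinite := by
  intro hfin
  obtain ⟨c, hc⟩ : ∃ c : R, (closure {c} : Set R).Infinite := by
    by_contra! h
    refine Set.infinite_univ (α := R) ((hfin.biUnion fun S hS ↦ ?_).subset fun x _ ↦
      Set.mem_biUnion ⟨x, rfl⟩ (subset_closure rfl))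
    obtain ⟨a, rfl⟩ := hS
    exact h a
  exact infinite_image_closure_singleton_closure hc
    (hfin.subset (by rintro _ ⟨a, -, rfl⟩; exact ⟨a, rfl⟩))
end

section
/- Let m ≥ 1 be a positive integer and let A = ℤ[1/m] be the subring of ℚ generated by 1/m. Let R be a unital ring and suppose there are unital ring homomorphisms g : R → A and h : A → R with g ∘ h = id_A, and that the kernel I of g is finite. Then the set of one-generated unital subrings of R is finite, and its cardinality is at most N·|I|, where N is the number of one-generated unital subrings of A. -/
/-!
Write `A = ℤ[1/m]`, `I = ker g`, and for `a : R` put `x = a - h (g a) ∈ I`. Some `m ^ e * g a` is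
an integer `z`, so `m ^ e * x = m ^ e * a - z ∈ ⟨a⟩₁`. Since `m` is a unit in `R` (through `h`)
and `I` is finite, the orbit of `x` under multiplication by `m ^ e` is periodic, so `x` is a
nonnegative power of `m ^ e` times `m ^ e * x`, hence lies in `⟨a⟩₁`; then so does `h (g a)`, and
`⟨a⟩₁ = h ⟨g a⟩₁ ⊔ ⟨x⟩₁` is determined by the pair `(⟨g a⟩₁, x)`.

`A` has only finitely many subrings: by Bézout a subring of `ℚ` contains `q` iff it contains
`1 / q.den`, iff it contains `1 / p` for every prime `p ∣ q.den`, and inside `A` only the primes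
dividing `m` occur.
-/

namespace Subring

theorem inv_den_mem_iff (C : Subring ℚ) (q : ℚ) : (q.den : ℚ)⁻¹ ∈ C ↔ q ∈ C := by
  constructor
  · intro h
    rw [← Rat.num_div_den q, div_eq_mul_inv]
    exact mul_mem (intCast_mem C _) h
  · intro hq
    obtain ⟨u, v, huv⟩ := q.isCoprime_num_den
    have : (q.den : ℚ)⁻¹ = u * q + v := by
      have hden : (q.den : ℚ) ≠ 0 := by exact_mod_cast q.den_nz
      have huv' : (u : ℚ) * (q * q.den) + v * q.den = 1 := by
        rw [Rat.mul_den_eq_num]; exact_mod_cast huv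
      field_simp
      linear_combination -huv'
    rw [this]
    exact add_mem (mul_mem (intCast_mem C u) hq) (intCast_mem C v)

theorem inv_natCast_mem_iff (C : Subring ℚ) {n : ℕ} (hn : n ≠ 0) :
    (n : ℚ)⁻¹ ∈ C ↔ ∀ p : ℕ, p.Prime → p ∣ n → (p : ℚ)⁻¹ ∈ C := by
  constructor
  · rintro h p hp ⟨k, rfl⟩
    have hk : (k : ℚ) ≠ 0 := by exact_mod_cast right_ne_zero_of_mul hn
    have : (p : ℚ)⁻¹ = k * ((p * k : ℕ) : ℚ)⁻¹ := by
      push_cast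
      field_simp
    rw [this]
    exact mul_mem (natCast_mem C k) h
  · clear hn
    induction n using Nat.recOnMul with
    | zero => simp
    | one => simp
    | prime p hp => exact fun h => h p hp dvd_rfl
    | mul a b iha ihb =>
      intro h
      rw [Nat.cast_mul, mul_inv]
      exact mul_mem (iha fun p hp hpa => h p hp (hpa.mul_right b))
        (ihb fun p hp hpb => h p hp (hpb.mul_left a))

theorem mem_iff_inv_prime_mem (C : Subring ℚ) (q : ℚ) :
    q ∈ C ↔ ∀ p : ℕ, p.Prime → p ∣ q.den → (p : ℚ)⁻¹ ∈ C := by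
  rw [← inv_den_mem_iff, inv_natCast_mem_iff C q.den_nz]

end Subring

theorem exists_pow_mul_eq_intCast_of_mem_closure {m : ℕ} (hm : m ≠ 0) {q : ℚ}
    (hq : q ∈ Subring.closure {1 / (m : ℚ)}) : ∃ e : ℕ, ∃ z : ℤ, (m : ℚ) ^ e * q = z := by
  induction hq using Subring.closure_induction with
  | mem x hx =>
    rw [Set.mem_singleton_iff] at hx
    exact ⟨1, 1, by simp [hx, hm]⟩
  | zero => exact ⟨0, 0, by simp⟩
  | one => exact ⟨0, 1, by simp⟩
  | add x y _ _ hx hy =>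
    obtain ⟨e₁, z₁, h₁⟩ := hx
    obtain ⟨e₂, z₂, h₂⟩ := hy
    refine ⟨e₁ + e₂, m ^ e₂ * z₁ + m ^ e₁ * z₂, ?_⟩
    push_cast
    linear_combination (m : ℚ) ^ e₂ * h₁ + (m : ℚ) ^ e₁ * h₂
  | neg x _ hx =>
    obtain ⟨e, z, h⟩ := hx
    exact ⟨e, -z, by push_cast; linear_combination -h⟩
  | mul x y _ _ hx hy =>
    obtain ⟨e₁, z₁, h₁⟩ := hx
    obtain ⟨e₂, z₂, h₂⟩ := hy
    refine ⟨e₁ + e₂, z₁ * z₂, ?_⟩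
    push_cast
    linear_combination ((m : ℚ) ^ e₂ * y) * h₁ + z₁ * h₂

theorem Rat.den_dvd_of_natCast_mul_eq_intCast {n : ℕ} {q : ℚ} {z : ℤ} (hn : n ≠ 0)
    (h : n * q = z) : q.den ∣ n := by
  have hq : q = Rat.divInt z n := by
    rw [Rat.divInt_eq_div, ← h]
    push_cast
    field_simp
  have := Rat.den_dvd z n
  rw [← hq] at this
  exact_mod_cast this

theorem prime_dvd_of_dvd_den_of_mem_closure {m : ℕ} (hm : m ≠ 0) {q : ℚ}
    (hq : q ∈ Subring.closure {1 / (m : ℚ)}) {p : ℕ} (hp : p.Prime) (hpq : p ∣ q.den) : p ∣ m := by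
  obtain ⟨e, z, h⟩ := exists_pow_mul_eq_intCast_of_mem_closure hm hq
  have h' : ((m ^ e : ℕ) : ℚ) * q = z := by exact_mod_cast h
  exact hp.dvd_of_dvd_pow (hpq.trans (Rat.den_dvd_of_natCast_mul_eq_intCast (pow_ne_zero e hm) h'))

theorem isUnit_natCast_closure_one_div {m : ℕ} (hm : m ≠ 0) :
    IsUnit (m : Subring.closure {1 / (m : ℚ)}) :=
  IsUnit.of_mul_eq_one ⟨1 / m, Subring.subset_closure rfl⟩ <| Subtype.ext <| by
    simp [hm]

theorem mem_iff_of_le_closure_one_div {m : ℕ} (hm : m ≠ 0) {C : Subring ℚ}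
    (hC : C ≤ Subring.closure {1 / (m : ℚ)}) (q : ℚ) :
    q ∈ C ↔ q ∈ Subring.closure {1 / (m : ℚ)} ∧
      ∀ p : m.primeFactors, (p : ℕ) ∣ q.den → ((p : ℕ) : ℚ)⁻¹ ∈ C := by
  refine ⟨fun hq => ⟨hC hq, fun p hpq => (C.mem_iff_inv_prime_mem q).mp hq p
    (Nat.prime_of_mem_primeFactors p.2) hpq⟩, fun ⟨hqA, hq⟩ => ?_⟩
  refine (C.mem_iff_inv_prime_mem q).mpr fun p hp hpq => hq ⟨p, ?_⟩ hpq
  exact Nat.mem_primeFactors_of_ne_zero hm |>.mpr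
    ⟨hp, prime_dvd_of_dvd_den_of_mem_closure hm hqA hp hpq⟩

theorem finite_subring_closure_one_div {m : ℕ} (hm : m ≠ 0) :
    Finite (Subring (Subring.closure {1 / (m : ℚ)})) := by
  set A := Subring.closure {1 / (m : ℚ)}
  have hle (B : Subring A) : B.map A.subtype ≤ A := by
    rintro _ ⟨x, -, rfl⟩
    exact x.2
  refine Finite.of_injective
    (fun B : Subring A => {p : m.primeFactors | ((p : ℕ) : ℚ)⁻¹ ∈ B.map A.subtype}) ?_
  intro B B' hBB'
  have hmap : B.map A.subtype = B'.map A.subtype := by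
    ext q
    rw [mem_iff_of_le_closure_one_div hm (hle B),
      mem_iff_of_le_closure_one_div hm (hle B')]
    exact and_congr_right fun _ => forall_congr' fun p =>
      imp_congr_right fun _ => Set.ext_iff.mp hBB' p
  simpa only [Subring.comap_map_eq_self_of_injective (f := A.subtype) Subtype.val_injective] using
    congrArg (Subring.comap A.subtype) hmap

theorem Subring.mem_of_isUnit_of_mul_mem {R : Type*} [Ring R] {S : Subring R} {u x : R}
    (hu : IsUnit u) (huS : u ∈ S) (hux : u * x ∈ S)
    (horbit : (Set.range fun n : ℕ => u ^ n * x).Finite) : x ∈ S := by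
  obtain ⟨i, j, hij, hfij⟩ := horbit.exists_lt_map_eq_of_forall_mem (Set.mem_range_self ·)
  obtain ⟨k, rfl⟩ := Nat.exists_eq_add_of_lt hij
  have hx : x = u ^ k * (u * x) := by
    apply (hu.pow i).mul_left_cancel
    rw [hfij]
    simp only [pow_add, pow_one, mul_assoc]
  rw [hx]
  exact mul_mem (pow_mem huS k) hux

section SplitExtension

variable {m : ℕ} {R : Type*} [Ring R] {g : R →+* Subring.closure {1 / (m : ℚ)}}
  {h : Subring.closure {1 / (m : ℚ)} →+* R}

theorem sub_map_map_mem_ker (hgh : g.comp h = RingHom.id _) (a : R) :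
    a - h (g a) ∈ RingHom.ker g := by
  rw [RingHom.mem_ker, map_sub, ← RingHom.comp_apply g h, hgh, RingHom.id_apply, sub_self]

theorem map_map_mem_closure_singleton (hm : m ≠ 0) (hgh : g.comp h = RingHom.id _)
    (hI : (RingHom.ker g : Set R).Finite) (a : R) : h (g a) ∈ Subring.closure {a} := by
  obtain ⟨e, z, hz⟩ : ∃ e : ℕ, ∃ z : ℤ, (m : Subring.closure {1 / (m : ℚ)}) ^ e * g a = z := by
    obtain ⟨e, z, hz⟩ := exists_pow_mul_eq_intCast_of_mem_closure hm (g a).2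
    exact ⟨e, z, Subtype.ext (by simpa using hz)⟩
  suffices hsub : a - h (g a) ∈ Subring.closure {a} by
    rw [← sub_sub_cancel a (h (g a))]
    exact sub_mem (Subring.subset_closure (Set.mem_singleton a)) hsub
  have hunit : IsUnit ((m : R) ^ e) := by
    simpa using ((isUnit_natCast_closure_one_div hm).map h).pow e
  have hmul : (m : R) ^ e * (a - h (g a)) ∈ Subring.closure {a} := by
    have hmz : (m : R) ^ e * h (g a) = z := by
      rw [← map_natCast h, ← map_pow, ← map_mul, hz, map_intCast]
    rw [mul_sub, hmz]
    exact sub_mem (mul_mem (pow_mem (natCast_mem _ m) e) (Subring.subset_closure rfl))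
      (intCast_mem _ z)
  have horbit : (Set.range fun n : ℕ => ((m : R) ^ e) ^ n * (a - h (g a))).Finite :=
    hI.subset <| Set.range_subset_iff.mpr fun n =>
      (RingHom.ker g).mul_mem_left _ (sub_map_map_mem_ker hgh a)
  exact Subring.mem_of_isUnit_of_mul_mem hunit (pow_mem (natCast_mem _ m) e) hmul horbit

theorem closure_singleton_eq_map_sup (hm : m ≠ 0) (hgh : g.comp h = RingHom.id _)
    (hI : (RingHom.ker g : Set R).Finite) (a : R) :
    Subring.closure {a} = (Subring.closure {g a}).map h ⊔ Subring.closure {a - h (g a)} := by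
  apply le_antisymm
  · rw [Subring.closure_le, Set.singleton_subset_iff]
    have hga : h (g a) ∈ (Subring.closure {g a}).map h :=
      Subring.mem_map.mpr ⟨g a, Subring.subset_closure (Set.mem_singleton _), rfl⟩
    have hsub : a - h (g a) ∈ Subring.closure {a - h (g a)} :=
      Subring.subset_closure (Set.mem_singleton _)
    have hsum := add_mem (le_sup_left (α := Subring R) hga) (le_sup_right (α := Subring R) hsub)
    rwa [add_sub_cancel] at hsum
  · rw [RingHom.map_closure, Set.image_singleton, sup_le_iff, Subring.closure_le,
      Subring.closure_le, Set.singleton_subset_iff, Set.singleton_subset_iff]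
    have hmem := map_map_mem_closure_singleton hm hgh hI a
    exact ⟨hmem, sub_mem (Subring.subset_closure rfl) hmem⟩

end SplitExtension

/-- If `R` is a unital ring together with a split surjection `g : R → ℤ[1/m]`
(split by a unital ring homomorphism `h`) whose kernel `I` is finite, then the set of
one-generated unital subrings of `R` is finite of cardinality at most `N * |I|`,
where `N` is the number of one-generated unital subrings of `ℤ[1/m]`. -/
theorem stmt_4 (m : ℕ) (hm : 1 ≤ m) (R : Type*) [Ring R]
    (g : R →+* ↥(Subring.closure {(1 / (m : ℚ) : ℚ)}))
    (h : ↥(Subring.closure {(1 / (m : ℚ) : ℚ)}) →+* R)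
    (hgh : g.comp h = RingHom.id _)
    (hI : (RingHom.ker g : Set R).Finite) :
    {S : Subring R | ∃ a : R, S = Subring.closure {a}}.Finite ∧
    Nat.card {S : Subring R | ∃ a : R, S = Subring.closure {a}} ≤
      Nat.card {S : Subring ↥(Subring.closure {(1 / (m : ℚ) : ℚ)}) |
          ∃ a, S = Subring.closure {a}} * Nat.card (RingHom.ker g) := by
  have hm : m ≠ 0 := by omega
  have := finite_subring_closure_one_div hm
  have := hI.to_subtype
  set SA := {S : Subring (Subring.closure {1 / (m : ℚ)}) | ∃ a, S = Subring.closure {a}}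
  set Φ : SA × RingHom.ker g → Subring R := fun Bε => Bε.1.1.map h ⊔ Subring.closure {Bε.2.1}
  have hsub : {S : Subring R | ∃ a : R, S = Subring.closure {a}} ⊆ Set.range Φ := by
    rintro _ ⟨a, rfl⟩
    exact ⟨(⟨_, g a, rfl⟩, ⟨_, sub_map_map_mem_ker hgh a⟩),
      (closure_singleton_eq_map_sup hm hgh hI a).symm⟩
  refine ⟨(Set.finite_range Φ).subset hsub, ?_⟩
  calc Nat.card {S : Subring R | ∃ a : R, S = Subring.closure {a}}
      ≤ Nat.card (Set.range Φ) := Nat.card_mono (Set.finite_range Φ) hsub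
    _ ≤ Nat.card (SA × RingHom.ker g) := Finite.card_range_le Φ
    _ = Nat.card SA * Nat.card (RingHom.ker g) := Nat.card_prod _ _
end

section
/- Let m be a positive integer, let R be a unital ring, and suppose there are unital ring homomorphisms g : R → ℤ[1/m] and h : ℤ[1/m] → R with g ∘ h = id and with the kernel of g finite (i.e., R is isomorphic to a unital semidirect product ℤ[1/m] ⋉ I for a finite ℤ[1/m]-ring I). Then R has only finitely many unital subrings, i.e., the set of all subrings of R (each containing 1) is finite. -/
private lemma mem_closure_char {m : ℕ} (hm : 1 ≤ m) {x : ℚ}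
    (hx : x ∈ Subring.closure {(1 / (m : ℚ) : ℚ)}) :
    ∃ z : ℤ, ∃ k : ℕ, x = z / (m : ℚ) ^ k := by
  have hm0 : (m : ℚ) ≠ 0 := Nat.cast_ne_zero.mpr (by omega)
  induction hx using Subring.closure_induction with
  | mem x hx =>
    simp only [Set.mem_singleton_iff] at hx
    exact ⟨1, 1, by rw [hx]; push_cast; ring⟩
  | zero => exact ⟨0, 0, by simp⟩
  | one => exact ⟨1, 0, by simp⟩
  | add x y hx hy ihx ihy =>
    obtain ⟨z1, k1, rfl⟩ := ihx
    obtain ⟨z2, k2, rfl⟩ := ihy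
    refine ⟨z1 * m ^ k2 + z2 * m ^ k1, k1 + k2, ?_⟩
    have hk1 : (m : ℚ) ^ k1 ≠ 0 := pow_ne_zero _ hm0
    have hk2 : (m : ℚ) ^ k2 ≠ 0 := pow_ne_zero _ hm0
    push_cast
    rw [div_add_div _ _ hk1 hk2, pow_add]
    congr 1
    ring
  | neg x hx ihx =>
    obtain ⟨z, k, rfl⟩ := ihx
    exact ⟨-z, k, by push_cast; ring⟩
  | mul x y hx hy ihx ihy =>
    obtain ⟨z1, k1, rfl⟩ := ihx
    obtain ⟨z2, k2, rfl⟩ := ihy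
    refine ⟨z1 * z2, k1 + k2, ?_⟩
    push_cast
    rw [div_mul_div_comm, pow_add]

/-- If all prime-reciprocals dividing `d` are in `B`, then `1/d` is in `B`. -/
private lemma inv_mem_of_primes {m : ℕ} (B : Subring ↥(Subring.closure {(1 / (m : ℚ) : ℚ)}))
    (d : ℕ) (hd : 0 < d)
    (hp : ∀ p : ℕ, p.Prime → p ∣ d → ∃ b ∈ B, (b : ℚ) = 1 / p) :
    ∃ b ∈ B, (b : ℚ) = 1 / d := by
  induction d using Nat.strong_induction_on with
  | _ d ih =>
    rcases eq_or_ne d 1 with rfl | hd1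
    · exact ⟨1, one_mem B, by simp⟩
    · have hdd : d ≠ 0 := hd.ne'
      have hpf : (Nat.minFac d).Prime := Nat.minFac_prime hd1
      obtain ⟨bp, hbp, hbpv⟩ := hp _ hpf (Nat.minFac_dvd d)
      have hlt : d / Nat.minFac d < d :=
        Nat.div_lt_self hd hpf.one_lt
      have hpos : 0 < d / Nat.minFac d :=
        Nat.div_pos (Nat.minFac_le hd) hpf.pos
      obtain ⟨b', hb', hb'v⟩ := ih _ hlt hpos (fun p hp' hdvd =>
        hp p hp' (hdvd.trans (Nat.div_dvd_of_dvd (Nat.minFac_dvd d))))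
      refine ⟨bp * b', mul_mem hbp hb', ?_⟩
      have hmul : (Nat.minFac d) * (d / Nat.minFac d) = d :=
        Nat.mul_div_cancel' (Nat.minFac_dvd d)
      have h1 : ((Nat.minFac d : ℚ)) ≠ 0 := by exact_mod_cast hpf.pos.ne'
      have h2 : ((d / Nat.minFac d : ℕ) : ℚ) ≠ 0 := by exact_mod_cast hpos.ne'
      push_cast
      rw [hbpv, hb'v, div_mul_div_comm, one_mul]
      congr 1
      exact_mod_cast hmul

private lemma subring_le {m : ℕ} (hm : 1 ≤ m)
    (B₁ B₂ : Subring ↥(Subring.closure {(1 / (m : ℚ) : ℚ)}))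
    (hsub : {i : Fin (m + 1) | ∃ a ∈ B₁, (a : ℚ) = 1 / (i : ℕ)} ⊆
      {i : Fin (m + 1) | ∃ a ∈ B₂, (a : ℚ) = 1 / (i : ℕ)}) :
    B₁ ≤ B₂ := by
  intro a ha
  obtain ⟨z, k, hzk⟩ := mem_closure_char hm a.2
  set q : ℚ := (a : ℚ) with hq
  have hden : (q.den : ℤ) ∣ (m : ℤ) ^ k := by
    have : q = Rat.divInt z ((m : ℤ) ^ k) := by
      rw [Rat.divInt_eq_div, hzk]; push_cast; ring
    rw [this] at *
    simpa using Rat.den_dvd z ((m : ℤ) ^ k)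
  have hdenN : q.den ∣ m ^ k := by exact_mod_cast hden
  have hden0 : (q.den : ℚ) ≠ 0 := by exact_mod_cast q.den_pos.ne'
  -- Bezout: get 1/q.den ∈ B₁
  have hcop : IsCoprime (q.num) (q.den : ℤ) := by
    rw [Int.isCoprime_iff_gcd_eq_one]
    exact q.reduced
  obtain ⟨u, v, huv⟩ := hcop
  have hb1 : ∃ b ∈ B₁, (b : ℚ) = 1 / q.den := by
    refine ⟨u • a + v • 1, add_mem (zsmul_mem ha u) (zsmul_mem (one_mem B₁) v), ?_⟩
    have hqd : q * q.den = (q.num : ℚ) := Rat.mul_den_eq_num q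
    have hQ : (u : ℚ) * q.num + v * q.den = 1 := by exact_mod_cast congrArg (fun t : ℤ => (t : ℚ)) huv
    push_cast
    simp only [zsmul_eq_mul]
    rw [← hq, eq_div_iff hden0]
    linear_combination (u : ℚ) * hqd + hQ
  obtain ⟨b1, hb1m, hb1v⟩ := hb1
  -- each prime dividing q.den gives 1/p in B₂
  have hprimes : ∀ p : ℕ, p.Prime → p ∣ q.den → ∃ b ∈ B₂, (b : ℚ) = 1 / p := by
    intro p hp hpd
    have hpm : p ∣ m := hp.dvd_of_dvd_pow (hpd.trans hdenN)
    have hplt : p < m + 1 := Nat.lt_succ_of_le (Nat.le_of_dvd hm hpm)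
    have hmem : (⟨p, hplt⟩ : Fin (m + 1)) ∈
        {i : Fin (m + 1) | ∃ a ∈ B₁, (a : ℚ) = 1 / (i : ℕ)} := by
      refine ⟨(q.den / p) • b1, nsmul_mem hb1m _, ?_⟩
      have hp0 : (p : ℚ) ≠ 0 := by exact_mod_cast hp.pos.ne'
      push_cast
      rw [hb1v, nsmul_eq_mul, Nat.cast_div hpd hp0, div_mul_div_comm, mul_one]
      rw [div_eq_div_iff (mul_ne_zero hp0 hden0) hp0]
      ring
    exact hsub hmem
  obtain ⟨b2, hb2m, hb2v⟩ := inv_mem_of_primes B₂ q.den q.den_pos hprimes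
  have : a = q.num • b2 := by
    apply Subtype.ext
    push_cast
    rw [hb2v, ← hq, zsmul_eq_mul, mul_one_div, Rat.num_div_den]
  rw [this]
  exact zsmul_mem hb2m _

private lemma finite_subring_A {m : ℕ} (hm : 1 ≤ m) :
    Finite (Subring ↥(Subring.closure {(1 / (m : ℚ) : ℚ)})) := by
  apply Finite.of_injective
    (fun B : Subring ↥(Subring.closure {(1 / (m : ℚ) : ℚ)}) =>
      ({i : Fin (m + 1) | ∃ a ∈ B, (a : ℚ) = 1 / (i : ℕ)} : Set (Fin (m + 1))))
  intro B₁ B₂ hB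
  exact le_antisymm (subring_le hm B₁ B₂ hB.le) (subring_le hm B₂ B₁ hB.ge)

/-- If a unital ring `R` is a split extension of `ℤ[1/m]` by a finite ideal for some
positive integer `m`, then `R` has only finitely many unital subrings. -/
theorem stmt_8 (m : ℕ) (hm : 1 ≤ m) (R : Type*) [Ring R]
    (g : R →+* ↥(Subring.closure {(1 / (m : ℚ) : ℚ)}))
    (h : ↥(Subring.closure {(1 / (m : ℚ) : ℚ)}) →+* R)
    (hgh : g.comp h = RingHom.id _)
    (hI : (RingHom.ker g : Set R).Finite) :
    Finite (Subring R) := by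
  have hm0 : (m : ℚ) ≠ 0 := Nat.cast_ne_zero.mpr (by omega)
  set A := ↥(Subring.closure {(1 / (m : ℚ) : ℚ)}) with hA
  haveI : Finite ↥(RingHom.ker g : Set R) := hI.to_subtype
  haveI : Finite (Subring A) := finite_subring_A hm
  set u : A := ⟨1 / (m : ℚ), Subring.subset_closure rfl⟩ with hu
  have hmu : m • u = 1 := by
    apply Subtype.ext
    rw [AddSubmonoidClass.coe_nsmul, OneMemClass.coe_one, nsmul_eq_mul]
    show (m : ℚ) * (1 / (m : ℚ)) = 1
    field_simp
  have hghx : ∀ x : A, g (h x) = x := fun x => RingHom.congr_fun hgh x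
  have hsmul : ∀ x : R, m • (h u * x) = x := by
    intro x
    rw [← smul_mul_assoc, ← map_nsmul, hmu, map_one, one_mul]
  -- the multiplication-by-m permutation of the kernel
  have hker_smul : ∀ x ∈ RingHom.ker g, m • x ∈ RingHom.ker g := fun x hx =>
    Submodule.smul_of_tower_mem _ m hx
  have hker_mul : ∀ x ∈ RingHom.ker g, h u * x ∈ RingHom.ker g := fun x hx =>
    Ideal.mul_mem_left _ _ hx
  set σ : ↥(RingHom.ker g : Set R) ≃ ↥(RingHom.ker g : Set R) :=
    { toFun := fun k => ⟨m • (k : R), hker_smul _ k.2⟩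
      invFun := fun k => ⟨h u * (k : R), hker_mul _ k.2⟩
      left_inv := fun k => Subtype.ext (by
        show h u * (m • (k : R)) = (k : R)
        rw [mul_smul_comm]
        exact hsmul _)
      right_inv := fun k => Subtype.ext (by
        show m • (h u * (k : R)) = (k : R)
        exact hsmul _) } with hσ
  set c : ℕ := orderOf σ with hc
  have hc_pos : 0 < c := orderOf_pos σ
  have hpow : ∀ (t : ℕ) (k : ↥(RingHom.ker g : Set R)), ((σ ^ t) k : R) = m ^ t • (k : R) := by
    intro t
    induction t with
    | zero => intro k; simp
    | succ t ih =>
      intro k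
      rw [pow_succ, Equiv.Perm.mul_apply, ih]
      show m ^ t • (m • (k : R)) = m ^ (t + 1) • (k : R)
      rw [smul_smul, ← pow_succ]
  have hfix : ∀ x ∈ RingHom.ker g, m ^ c • x = x := by
    intro x hx
    have := hpow c ⟨x, hx⟩
    rw [pow_orderOf_eq_one σ] at this
    simpa using this.symm
  -- KEY: for any subring S and s ∈ S, s - h (g s) ∈ S
  have KEY : ∀ (S : Subring R) (s : R), s ∈ S → s - h (g s) ∈ S := by
    intro S s hs
    obtain ⟨z, i, hzi⟩ := mem_closure_char hm (g s).2
    have h1 : (m : ℚ) ^ i ≠ 0 := pow_ne_zero _ hm0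
    have hA1 : m ^ i • (g s) = z • (1 : A) := by
      apply Subtype.ext
      rw [AddSubmonoidClass.coe_nsmul, AddSubgroupClass.coe_zsmul, OneMemClass.coe_one,
        nsmul_eq_mul, zsmul_eq_mul, mul_one, hzi]
      push_cast
      field_simp
    set x : R := s - h (g s) with hx
    have hxK : x ∈ RingHom.ker g := by
      rw [RingHom.mem_ker, hx, map_sub, hghx, sub_self]
    have hxiS : m ^ i • x ∈ S := by
      have : m ^ i • x = m ^ i • s - z • (1 : R) := by
        rw [hx, smul_sub, ← map_nsmul h, hA1, map_zsmul, map_one]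
      rw [this]
      exact sub_mem (nsmul_mem hs _) (zsmul_mem (one_mem S) _)
    have hxiK : m ^ i • x ∈ RingHom.ker g :=
      Submodule.smul_of_tower_mem _ _ hxK
    have haux : ∀ t : ℕ, m ^ (c * t) • x = x := by
      intro t
      induction t with
      | zero => simp
      | succ t ih =>
        rw [Nat.mul_succ, pow_add, mul_smul, hfix x hxK, ih]
    have hle : i ≤ c * i := Nat.le_mul_of_pos_left i hc_pos
    have : x = m ^ (c * i - i) • (m ^ i • x) := by
      rw [smul_smul, ← pow_add, Nat.sub_add_cancel hle, haux i]
    rw [hx] at this ⊢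
    rw [this]
    exact nsmul_mem hxiS _
  -- the injection
  apply Finite.of_injective
    (fun S : Subring R =>
      ((S.map g : Subring A),
        ({k : ↥(RingHom.ker g : Set R) | (k : R) ∈ S} : Set ↥(RingHom.ker g : Set R))))
  intro S₁ S₂ hS
  have h1 : S₁.map g = S₂.map g := congrArg Prod.fst hS
  have h2 : {k : ↥(RingHom.ker g : Set R) | (k : R) ∈ S₁} =
      {k : ↥(RingHom.ker g : Set R) | (k : R) ∈ S₂} := congrArg Prod.snd hS
  have hle : ∀ (T₁ T₂ : Subring R), T₁.map g = T₂.map g →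
      {k : ↥(RingHom.ker g : Set R) | (k : R) ∈ T₁} ⊆
        {k : ↥(RingHom.ker g : Set R) | (k : R) ∈ T₂} → T₁ ≤ T₂ := by
    intro T₁ T₂ hT hTs s hs
    have : g s ∈ T₂.map g := by
      rw [← hT]
      exact ⟨s, hs, rfl⟩
    obtain ⟨t, ht, hgt⟩ := this
    have hx₁T : s - h (g s) ∈ T₁ := KEY T₁ s hs
    have hx₁K : s - h (g s) ∈ RingHom.ker g := by
      rw [RingHom.mem_ker, map_sub, hghx, sub_self]
    have hx₁T₂ : s - h (g s) ∈ T₂ := hTs (show (⟨s - h (g s), hx₁K⟩ :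
      ↥(RingHom.ker g : Set R)) ∈ _ from hx₁T)
    have hx₂ : t - h (g t) ∈ T₂ := KEY T₂ t ht
    have : s = (s - h (g s)) + (t - (t - h (g t))) := by
      rw [hgt, sub_sub_cancel, sub_add_cancel]
    rw [this]
    exact add_mem hx₁T₂ (sub_mem ht hx₂)
  exact le_antisymm (hle S₁ S₂ h1 h2.subset) (hle S₂ S₁ h1.symm h2.superset)
end

section
/- If F is an infinite field, then the cardinality of the set of one-generated unital subrings of F equals the cardinality of F, and the cardinality of the set of one-generated (nonunital) subrings of F also equals the cardinality of F. (Consequently, since F is commutative, both the compressed and the unital compressed commuting graphs of F are complete graphs with all loops on |F| vertices.) -/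
/-!
Every element `a` lies in its own one-generated subring, and `⟨a⟩ ⊆ ⟨a⟩₁ = ℤ[a]` is countable,
so `F` is covered by `#T` countable sets, where `T` is the set of one-generated subrings;
hence `#F ≤ #T * ℵ₀ = #T` as soon as `T` is infinite. That `T` is infinite comes from the
characteristic: in characteristic `0` the elements `1/p` for `p` prime generate pairwise distinct
subrings (`1/q ∉ ℤ[1/p]`, since elements of `ℤ[1/p]` have `p`-power denominators); in
characteristic `p`, either every element is algebraic over `𝔽_p`, so every `ℤ[a]` is finite and
finitely many of them cannot cover `F`, or some `t` is transcendental and the powers `t^q`,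
`q` prime, generate pairwise distinct subrings.
-/

open Cardinal Polynomial Set

universe u

namespace SetLike

variable {α β : Type u} [SetLike β α] {f : α → β}

theorem mk_range_eq_of_countable (hmem : ∀ a, a ∈ f a) (hcount : ∀ a, (f a : Set α).Countable)
    (hinf : (range f).Infinite) : #(range f) = #α := by
  refine le_antisymm mk_range_le ?_
  have hfiber : ∀ S : range f, #(rangeFactorization f ⁻¹' {S}) ≤ ℵ₀ := by
    rintro ⟨_, a, rfl⟩
    rw [mk_le_aleph0_iff, countable_coe_iff]
    refine (hcount a).mono fun x hx => ?_
    have hx : f x = f a := congrArg Subtype.val (mem_singleton_iff.mp hx)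
    exact hx ▸ hmem x
  have := hinf.to_subtype
  calc #α ≤ #(range f) * ℵ₀ := mk_le_mk_mul_of_mk_preimage_le _ hfiber
    _ = #(range f) := mul_aleph0_eq (aleph0_le_mk _)

theorem infinite_range_of_finite [Infinite α] (hmem : ∀ a, a ∈ f a)
    (hfin : ∀ a, (f a : Set α).Finite) : (range f).Infinite := fun hr =>
  infinite_univ ((hr.biUnion (t := fun S : β => (S : Set α)) fun _ ⟨a, ha⟩ => ha ▸ hfin a).subset
    fun a _ => mem_biUnion (mem_range_self a) (hmem a))

theorem infinite_range_of_forall_notMem {ι : Type*} [Infinite ι] (hmem : ∀ a, a ∈ f a)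
    (g : ι → α) (hg : ∀ i j, i ≠ j → g j ∉ f (g i)) : (range f).Infinite := by
  have hinj : Function.Injective (f ∘ g) := fun i j h =>
    by_contra fun hij => hg i j hij (by have h : f (g i) = f (g j) := h; rw [h]; exact hmem (g j))
  exact (infinite_range_of_injective hinj).mono (range_comp_subset_range g f)

end SetLike

theorem Subring.countable_closure_singleton {R : Type*} [Ring R] (a : R) :
    (Subring.closure {a} : Set R).Countable := by
  have h := Algebra.lift_cardinalMk_adjoin_le ℤ ({a} : Set R)
  simp only [mk_int, lift_aleph0, mk_singleton, lift_one, max_eq_left one_le_aleph0, max_self,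
    lift_le_aleph0, Algebra.adjoin_int] at h
  exact countable_coe_iff.mp (mk_le_aleph0_iff.mp h)

theorem NonUnitalSubring.closure_subset_subring_closure {R : Type*} [Ring R] (s : Set R) :
    (NonUnitalSubring.closure s : Set R) ⊆ Subring.closure s :=
  NonUnitalSubring.closure_le (t := (Subring.closure s).toNonUnitalSubring).mpr
    Subring.subset_closure

theorem Subring.mem_closure_singleton {R : Type*} [CommRing R] {a b : R} :
    b ∈ Subring.closure {a} ↔ ∃ f : ℤ[X], aeval a f = b := by
  rw [← mem_subalgebraOfSubring, ← Algebra.adjoin_int, Algebra.adjoin_singleton_eq_range_aeval]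
  rfl

theorem exists_pow_mul_eq_intCast_of_mem_closure_inv {F : Type*} [Field F] (p : ℕ) {x : F}
    (hx : x ∈ Subring.closure {(p : F)⁻¹}) : ∃ (k : ℕ) (m : ℤ), (p : F) ^ k * x = m := by
  induction hx using Subring.closure_induction with
  | mem x hx =>
    obtain rfl := mem_singleton_iff.mp hx
    by_cases hp : (p : F) = 0
    · exact ⟨0, 0, by simp [hp]⟩
    · exact ⟨1, 1, by simp [hp]⟩
  | zero => exact ⟨0, 0, by simp⟩
  | one => exact ⟨0, 1, by simp⟩
  | add x y _ _ hx hy =>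
    obtain ⟨k, m, hm⟩ := hx
    obtain ⟨l, n, hn⟩ := hy
    exact ⟨k + l, m * p ^ l + n * p ^ k, by push_cast; rw [← hm, ← hn]; ring⟩
  | neg x _ hx =>
    obtain ⟨k, m, hm⟩ := hx
    exact ⟨k, -m, by push_cast; rw [← hm]; ring⟩
  | mul x y _ _ hx hy =>
    obtain ⟨k, m, hm⟩ := hx
    obtain ⟨l, n, hn⟩ := hy
    exact ⟨k + l, m * n, by push_cast; rw [← hm, ← hn]; ring⟩

theorem inv_natCast_notMem_closure_inv_natCast {F : Type*} [Field F] [CharZero F] {p q : ℕ}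
    (hq : q.Prime) (hqp : ¬ q ∣ p) : (q : F)⁻¹ ∉ Subring.closure {(p : F)⁻¹} := by
  intro hmem
  obtain ⟨k, m, hm⟩ := exists_pow_mul_eq_intCast_of_mem_closure_inv p hmem
  have hq0 : (q : F) ≠ 0 := Nat.cast_ne_zero.mpr hq.ne_zero
  have hpow : ((p ^ k : ℕ) : ℤ) = q * m := by
    exact_mod_cast (by field_simp at hm; exact hm : (p : F) ^ k = q * m)
  exact hqp (hq.dvd_of_dvd_pow (Int.natCast_dvd_natCast.mp ⟨m, hpow⟩))

/- If `t ^ m = f (t ^ n)` with `f ∈ ℤ[X]`, then `t` is a root of `f (X ^ n) - X ^ m`, whose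
coefficient of `X ^ m` is `-1` because `n ∤ m`. -/
theorem Transcendental.pow_notMem_closure_pow {K R : Type*} [CommRing K] [Nontrivial K]
    [CommRing R] [Algebra K R] {t : R} (ht : Transcendental K t) {m n : ℕ} (hn : 0 < n)
    (hnm : ¬ n ∣ m) : t ^ m ∉ Subring.closure {t ^ n} := by
  intro hmem
  obtain ⟨f, hf⟩ := Subring.mem_closure_singleton.mp hmem
  set g : K[X] := expand K n (f.map (algebraMap ℤ K)) - X ^ m
  have hg : Polynomial.aeval t g = 0 := by
    simp only [g, map_sub, expand_aeval, aeval_map_algebraMap, hf, map_pow, aeval_X, sub_self]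
  have hgm : g.coeff m = -1 := by
    simp only [g, coeff_sub, coeff_expand hn, if_neg hnm, coeff_X_pow_self, zero_sub]
  refine ht ⟨g, fun h0 => ?_, hg⟩
  rw [h0, coeff_zero, zero_eq_neg] at hgm
  exact one_ne_zero hgm

theorem IsIntegral.finite_closure_singleton {K R : Type*} [CommRing K] [Finite K] [CommRing R]
    [Algebra K R] {a : R} (ha : IsIntegral K a) : (Subring.closure {a} : Set R).Finite := by
  have : Module.Finite K (Algebra.adjoin K {a}) :=
    ⟨(Submodule.fg_top _).mpr ha.fg_adjoin_singleton⟩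
  have : Finite (Algebra.adjoin K {a}) := Module.finite_of_finite K
  exact (toFinite (Algebra.adjoin K {a} : Set R)).subset
    (Subring.closure_le (t := (Algebra.adjoin K {a}).toSubring).mpr
      (by simp [Algebra.subset_adjoin]))

theorem Field.forall_finite_closure_singleton_or_exists_notMem_closure (F : Type*) [Field F] :
    (∀ a : F, (Subring.closure {a} : Set F).Finite) ∨
      ∃ g : Nat.Primes → F, ∀ p q, p ≠ q → g q ∉ Subring.closure {g p} := by
  obtain ⟨p, hchar⟩ := CharP.exists F
  rcases CharP.char_is_prime_or_zero F p with hp | rfl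
  · have : Fact p.Prime := ⟨hp⟩
    let := ZMod.algebra F p
    by_cases halg : ∀ a : F, IsAlgebraic (ZMod p) a
    · exact .inl fun a => (halg a).isIntegral.finite_closure_singleton
    · obtain ⟨t, ht⟩ := not_forall.mp halg
      refine .inr ⟨fun q => t ^ (q : ℕ), fun q r hqr =>
        Transcendental.pow_notMem_closure_pow ht q.2.pos ?_⟩
      exact fun h => hqr (Subtype.ext ((Nat.prime_dvd_prime_iff_eq q.2 r.2).mp h))
  · have : CharZero F := CharP.charP_to_charZero F
    refine .inr ⟨fun q => ((q : ℕ) : F)⁻¹, fun q r hqr => ?_⟩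
    exact inv_natCast_notMem_closure_inv_natCast r.2
      fun h => hqr (Subtype.ext ((Nat.prime_dvd_prime_iff_eq r.2 q.2).mp h).symm)

theorem Field.mk_range_eq_of_subset_closure_singleton {F β : Type u} [Field F] [Infinite F]
    [SetLike β F] {f : F → β} (hmem : ∀ a, a ∈ f a)
    (hsub : ∀ a, (f a : Set F) ⊆ Subring.closure {a}) : #(range f) = #F := by
  refine SetLike.mk_range_eq_of_countable hmem
    (fun a => (Subring.countable_closure_singleton a).mono (hsub a)) ?_
  rcases Field.forall_finite_closure_singleton_or_exists_notMem_closure F with hfin | ⟨g, hg⟩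
  · exact SetLike.infinite_range_of_finite hmem fun a => (hfin a).subset (hsub a)
  · exact SetLike.infinite_range_of_forall_notMem hmem g fun p q hpq h => hg p q hpq (hsub _ h)

/-- For an infinite field `F`, both the number of one-generated unital subrings and
the number of one-generated (nonunital) subrings equal the cardinality of `F`. -/
theorem stmt_9 (F : Type*) [Field F] [Infinite F] :
    #{S : Subring F | ∃ a : F, S = Subring.closure {a}} = #F ∧
    #{S : NonUnitalSubring F | ∃ a : F, S = NonUnitalSubring.closure {a}} = #F := by
  have hU : {S : Subring F | ∃ a : F, S = Subring.closure {a}} =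
      range fun a : F => Subring.closure {a} :=
    Set.ext fun _ => exists_congr fun _ => eq_comm
  have hN : {S : NonUnitalSubring F | ∃ a : F, S = NonUnitalSubring.closure {a}} =
      range fun a : F => NonUnitalSubring.closure {a} :=
    Set.ext fun _ => exists_congr fun _ => eq_comm
  rw [hU, hN]
  exact ⟨Field.mk_range_eq_of_subset_closure_singleton (fun a => Subring.subset_closure rfl)
      fun _ => subset_rfl,
    Field.mk_range_eq_of_subset_closure_singleton (fun a => NonUnitalSubring.subset_closure rfl)
      fun a => NonUnitalSubring.closure_subset_subring_closure {a}⟩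
end

section
/- For every cardinal number α with α ≥ 1, there exists a commutative unital ring R such that the cardinality of the set of one-generated unital subrings of R equals α (equivalently, the unital compressed commuting graph of R is the complete graph with all loops on α vertices). -/
/-!
In the trivial square-zero extension `ℤ ⊕ M` the subring generated by `(r, m)` is
`ℤ ⊕ ℤm`, so its one-generated unital subrings correspond bijectively to the cyclic subgroups
of `M`. An `𝔽₂`-vector space of infinite dimension `α` has `α` cyclic subgroups, and
`ℤ/2^k` has `k + 1`, one for each divisor of `2^k`.
-/

open Cardinal

universe u v

def Subring.oneGenerated (R : Type*) [Ring R] : Set (Subring R) :=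
  {S | ∃ a : R, S = Subring.closure {a}}

namespace TrivSqZeroExt

variable {M : Type*} [AddCommGroup M] [Module ℤᵐᵒᵖ M] [IsCentralScalar ℤ M]

def sndPreimage (H : AddSubgroup M) : Subring (TrivSqZeroExt ℤ M) where
  carrier := {x | x.snd ∈ H}
  one_mem' := by simp
  zero_mem' := by simp
  add_mem' hx hy := by simpa using add_mem hx hy
  neg_mem' {x} hx := by simpa using H.neg_mem hx
  mul_mem' {x y} hx hy := by
    rw [Set.mem_ofPred_eq, snd_mul, op_smul_eq_smul]
    exact add_mem (zsmul_mem hy _) (zsmul_mem hx _)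

@[simp]
theorem mem_sndPreimage {H : AddSubgroup M} {x : TrivSqZeroExt ℤ M} :
    x ∈ sndPreimage H ↔ x.snd ∈ H := Iff.rfl

theorem sndPreimage_injective : Function.Injective (sndPreimage (M := M)) := fun _ _ h =>
  AddSubgroup.ext fun m => by simpa using SetLike.ext_iff.1 h (inr m)

theorem closure_singleton_eq_sndPreimage (a : TrivSqZeroExt ℤ M) :
    Subring.closure {a} = sndPreimage (AddSubgroup.zmultiples a.snd) := by
  refine le_antisymm (Subring.closure_le.2 ?_) fun x hx => ?_
  · rintro _ rfl
    exact AddSubgroup.mem_zmultiples _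
  obtain ⟨t, ht⟩ := mem_sndPreimage.1 hx
  have hx' : x = (x.fst : TrivSqZeroExt ℤ M) + t • (a - (a.fst : TrivSqZeroExt ℤ M)) := by
    ext
    · simp
    · simp [← ht]
  have ha : a ∈ Subring.closure {a} := Subring.subset_closure rfl
  rw [hx']
  exact add_mem (intCast_mem _ _) (zsmul_mem (sub_mem ha (intCast_mem _ _)) t)

theorem oneGenerated_eq_image_sndPreimage :
    Subring.oneGenerated (TrivSqZeroExt ℤ M) =
      sndPreimage '' Set.range AddSubgroup.zmultiples := by
  ext S
  simp only [Subring.oneGenerated, closure_singleton_eq_sndPreimage, Set.mem_ofPred_eq,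
    Set.mem_image, Set.mem_range]
  constructor
  · rintro ⟨a, rfl⟩
    exact ⟨_, ⟨a.snd, rfl⟩, rfl⟩
  · rintro ⟨_, ⟨m, rfl⟩, rfl⟩
    exact ⟨inr m, rfl⟩

theorem mk_oneGenerated :
    #(Subring.oneGenerated (TrivSqZeroExt ℤ M)) =
      #(Set.range (AddSubgroup.zmultiples : M → AddSubgroup M)) := by
  rw [oneGenerated_eq_image_sndPreimage, mk_image_eq sndPreimage_injective]

end TrivSqZeroExt

theorem exists_commRing_mk_oneGenerated_eq (M : Type u) [AddCommGroup M] :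
    ∃ (R : Type u) (_ : CommRing R), #(Subring.oneGenerated R) =
      #(Set.range (AddSubgroup.zmultiples : M → AddSubgroup M)) :=
  -- `TrivSqZeroExt` asks for the right action of `ℤ` on `M` as a separate instance.
  letI : Module ℤᵐᵒᵖ M := Module.compHom M ((RingHom.id ℤ).fromOpposite mul_comm)
  haveI : IsCentralScalar ℤ M := ⟨fun _ _ => rfl⟩
  ⟨TrivSqZeroExt ℤ M, inferInstance, TrivSqZeroExt.mk_oneGenerated⟩

theorem AddEquiv.lift_mk_range_zmultiples {M : Type u} {N : Type v} [AddGroup M] [AddGroup N]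
    (e : M ≃+ N) :
    lift.{v} #(Set.range (AddSubgroup.zmultiples : M → AddSubgroup M)) =
      lift.{u} #(Set.range (AddSubgroup.zmultiples : N → AddSubgroup N)) := by
  have h : e.mapAddSubgroup '' Set.range AddSubgroup.zmultiples =
      Set.range AddSubgroup.zmultiples := by
    rw [← Set.range_comp, ← e.surjective.range_comp]
    congr 1
    funext m
    exact (e : M →+ N).map_zmultiples m
  rw [← h, mk_image_eq_lift _ _ e.mapAddSubgroup.injective]

section ZModTwoModule

variable {M : Type*} [AddCommGroup M] [Module (ZMod 2) M]

theorem AddSubgroup.mem_zmultiples_iff_of_zmod_two {v w : M} :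
    w ∈ AddSubgroup.zmultiples v ↔ w = 0 ∨ w = v := by
  refine ⟨fun h => ?_, by rintro (rfl | rfl) <;> simp [AddSubgroup.mem_zmultiples]⟩
  obtain ⟨t, rfl⟩ := AddSubgroup.mem_zmultiples_iff.1 h
  rw [← Int.cast_smul_eq_zsmul (ZMod 2)]
  rcases (by decide : ∀ c : ZMod 2, c = 0 ∨ c = 1) t with h | h <;> simp [h]

theorem AddSubgroup.zmultiples_injective_of_zmod_two :
    Function.Injective (AddSubgroup.zmultiples : M → AddSubgroup M) := by
  intro v w h
  have hv := mem_zmultiples_iff_of_zmod_two.1 (h ▸ AddSubgroup.mem_zmultiples v)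
  have hw := mem_zmultiples_iff_of_zmod_two.1 (h ▸ AddSubgroup.mem_zmultiples w)
  grind

end ZModTwoModule

namespace ZMod

variable {n : ℕ} [NeZero n]

theorem zmultiples_eq_zmultiples_gcd (v : ZMod n) :
    AddSubgroup.zmultiples v = AddSubgroup.zmultiples ((v.val.gcd n : ℕ) : ZMod n) := by
  apply le_antisymm
  · rw [AddSubgroup.zmultiples_le, AddSubgroup.mem_zmultiples_iff]
    obtain ⟨c, hc⟩ := Nat.gcd_dvd_left v.val n
    refine ⟨c, ?_⟩
    rw [zsmul_eq_mul, Int.cast_natCast, mul_comm, ← Nat.cast_mul, ← hc, natCast_zmod_val]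
  · rw [AddSubgroup.zmultiples_le, AddSubgroup.mem_zmultiples_iff]
    refine ⟨v.val.gcdA n, ?_⟩
    have bezout := congrArg (Int.cast : ℤ → ZMod n) (Nat.gcd_eq_gcd_ab v.val n)
    push_cast at bezout
    rw [bezout, natCast_self, natCast_zmod_val, zsmul_eq_mul]
    ring

theorem injOn_zmultiples_natCast_divisors :
    Set.InjOn (fun d : ℕ => AddSubgroup.zmultiples (d : ZMod n)) n.divisors := by
  intro d hd e he h
  have hcard := congrArg (fun H : AddSubgroup (ZMod n) => Nat.card H) h
  simp only [Nat.card_zmultiples, addOrderOf_coe _ (NeZero.ne n)] at hcard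
  rw [Finset.mem_coe, Nat.mem_divisors] at hd he
  rw [Nat.gcd_eq_right hd.1, Nat.gcd_eq_right he.1] at hcard
  rw [← Nat.div_div_self hd.1 hd.2, hcard, Nat.div_div_self he.1 he.2]

theorem range_zmultiples :
    Set.range (AddSubgroup.zmultiples : ZMod n → AddSubgroup (ZMod n)) =
      (fun d : ℕ => AddSubgroup.zmultiples (d : ZMod n)) '' n.divisors := by
  refine subset_antisymm ?_ ?_
  · rintro _ ⟨v, rfl⟩
    exact ⟨_, Nat.mem_divisors.2 ⟨Nat.gcd_dvd_right _ _, NeZero.ne n⟩,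
      (zmultiples_eq_zmultiples_gcd v).symm⟩
  · rintro _ ⟨d, -, rfl⟩
    exact ⟨d, rfl⟩

theorem mk_range_zmultiples :
    #(Set.range (AddSubgroup.zmultiples : ZMod n → AddSubgroup (ZMod n))) = n.divisors.card := by
  rw [range_zmultiples, mk_image_eq_of_injOn _ _ injOn_zmultiples_natCast_divisors,
    Finset.coe_sort_coe, mk_coe_finset]

theorem mk_range_zmultiples_ulift :
    #(Set.range (AddSubgroup.zmultiples : ULift.{u} (ZMod n) → AddSubgroup (ULift (ZMod n)))) =
      n.divisors.card := by
  simpa [mk_range_zmultiples] using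
    (AddEquiv.ulift : ULift.{u} (ZMod n) ≃+ ZMod n).lift_mk_range_zmultiples

end ZMod

/-- For every cardinal `α ≥ 1` there exists a commutative unital ring whose number of
one-generated unital subrings equals `α`. -/
theorem stmt_11 (α : Cardinal.{u}) (hα : 1 ≤ α) :
    ∃ (R : Type u) (_ : CommRing R),
      #{S : Subring R | ∃ a : R, S = Subring.closure {a}} = α := by
  rcases lt_or_ge α ℵ₀ with hfin | hinf
  · obtain ⟨n, rfl⟩ := lt_aleph0.1 hfin
    obtain ⟨k, rfl⟩ := Nat.exists_eq_add_of_le' (Nat.one_le_cast.1 hα)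
    obtain ⟨R, _, hR⟩ := exists_commRing_mk_oneGenerated_eq (ULift.{u} (ZMod (2 ^ k)))
    refine ⟨R, _, hR.trans ?_⟩
    rw [ZMod.mk_range_zmultiples_ulift, Nat.divisors_prime_pow Nat.prime_two]
    simp
  · have : Infinite α.out := infinite_iff.2 (by rwa [mk_out])
    obtain ⟨R, _, hR⟩ := exists_commRing_mk_oneGenerated_eq (α.out →₀ ZMod 2)
    refine ⟨R, _, hR.trans ?_⟩
    rw [mk_range_eq _ AddSubgroup.zmultiples_injective_of_zmod_two,
      mk_finsupp_lift_of_infinite, lift_uzero, mk_out]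
    simpa using (natCast_lt_aleph0 (n := 2)).le.trans hinf
end

section
/- Let m ≥ 1 be a positive integer and let s be the number of distinct prime divisors of m. Then the subring ℤ[1/m] of ℚ has exactly 2^s unital subrings generated by one element, i.e., the set {S : S is a subring of ℤ[1/m] and S = ⟨a⟩₁ for some a ∈ ℤ[1/m]} has exactly 2^s elements. (Equivalently, Λ¹(ℤ[1/m]) is the complete graph with all loops on 2^s vertices.) -/
/-!
An element `a = k / d` of `ℚ` in lowest terms generates the same unital subring as `1 / d`
(Bézout: `u k + v d = 1` gives `1 / d = u a + v`), and `⟨1 / d⟩₁` consists exactly of the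
rationals whose denominator has all its prime factors among those of `d`. So a one-generated
subring of `ℚ` is determined by the set of primes dividing the denominator of a generator.
Inside `ℤ[1/m]` these sets are exactly the subsets of the prime factors of `m`.
-/

open Finset

theorem Nat.card_range_eq_of_ker_eq {α β γ : Type*} {f : α → β} {g : α → γ}
    (h : Setoid.ker f = Setoid.ker g) : Nat.card (Set.range f) = Nat.card (Set.range g) :=
  Nat.card_congr <| (Setoid.quotientKerEquivRange f).symm.trans <|
    (Quotient.congrRight (Setoid.ext_iff.1 h)).trans (Setoid.quotientKerEquivRange g)

theorem Subring.closure_singleton_eq_iff_coe {A : Type*} [Ring A] {S : Subring A} (a b : S) :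
    closure {a} = closure {b} ↔ closure {(a : A)} = closure {(b : A)} := by
  have hmap : ∀ c : S, (closure {c}).map S.subtype = closure {(c : A)} := fun c => by
    rw [RingHom.map_closure, Set.image_singleton]
    rfl
  have hinj : Function.Injective (map S.subtype) :=
    Function.LeftInverse.injective (g := comap S.subtype)
      (comap_map_eq_self_of_injective Subtype.val_injective)
  rw [← hmap, ← hmap, hinj.eq_iff]

theorem Subring.inv_natCast_mem_of_dvd_pow {K : Type*} [Field K] [CharZero K] {S : Subring K}
    {n d k : ℕ} (hn : n ≠ 0) (hS : (n : K)⁻¹ ∈ S) (hd : d ∣ n ^ k) : (d : K)⁻¹ ∈ S := by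
  obtain ⟨c, hc⟩ := hd
  have hc0 : (c : K) ≠ 0 := Nat.cast_ne_zero.2 (right_ne_zero_of_mul (hc ▸ pow_ne_zero k hn))
  have : (d : K)⁻¹ = c * (n : K)⁻¹ ^ k := by
    rw [inv_pow, ← Nat.cast_pow, hc, Nat.cast_mul]
    field_simp
  rw [this]
  exact mul_mem (natCast_mem S c) (pow_mem hS k)

namespace Rat

theorem primeFactors_den_inv_natCast (n : ℕ) : (n : ℚ)⁻¹.den.primeFactors = n.primeFactors := by
  rw [inv_natCast_den]
  split_ifs with hn <;> simp [hn]

theorem inv_den_mem_closure_singleton (a : ℚ) : (a.den : ℚ)⁻¹ ∈ Subring.closure {a} := by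
  obtain ⟨u, v, huv⟩ : IsCoprime a.num (a.den : ℤ) := Int.isCoprime_iff_gcd_eq_one.2 a.reduced
  have : (a.den : ℚ)⁻¹ = u * a + v := by
    have h := congrArg (Int.cast : ℤ → ℚ) huv
    push_cast at h
    have hnum : a * a.den = a.num := mul_den_eq_num a
    field_simp
    linear_combination -h - u * hnum
  rw [this]
  exact add_mem (mul_mem (intCast_mem _ _) (Subring.subset_closure rfl)) (intCast_mem _ _)

theorem mem_closure_singleton_iff {a x : ℚ} :
    x ∈ Subring.closure {a} ↔ x.den.primeFactors ⊆ a.den.primeFactors := by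
  constructor
  · have of_dvd : ∀ {x y z : ℚ}, z.den ∣ x.den * y.den → x.den.primeFactors ⊆ a.den.primeFactors →
        y.den.primeFactors ⊆ a.den.primeFactors → z.den.primeFactors ⊆ a.den.primeFactors :=
      fun {x y z} hz hx hy => by
        grw [Nat.primeFactors_mono hz (mul_ne_zero x.den_nz y.den_nz),
          Nat.primeFactors_mul x.den_nz y.den_nz]
        exact union_subset hx hy
    intro hx
    induction hx using Subring.closure_induction with
    | mem x hx => rw [Set.mem_singleton_iff.1 hx]
    | zero => simp
    | one => simp
    | add x y _ _ hx hy => exact of_dvd (add_den_dvd x y) hx hy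
    | neg x _ hx => rwa [neg_den]
    | mul x y _ _ hx hy => exact of_dvd (mul_den_dvd x y) hx hy
  · intro hx
    have hinv : (x.den : ℚ)⁻¹ ∈ Subring.closure {a} :=
      Subring.inv_natCast_mem_of_dvd_pow a.den_nz (inv_den_mem_closure_singleton a)
        ((Nat.dvd_pow_self_iff x.den_nz a.den_nz).2 hx)
    rw [← num_div_den x, div_eq_mul_inv]
    exact mul_mem (intCast_mem _ _) hinv

theorem closure_singleton_eq_iff {a b : ℚ} :
    Subring.closure {a} = Subring.closure {b} ↔ a.den.primeFactors = b.den.primeFactors := by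
  constructor
  · intro h
    exact Subset.antisymm (mem_closure_singleton_iff.1 (h ▸ Subring.subset_closure rfl))
      (mem_closure_singleton_iff.1 (h ▸ Subring.subset_closure rfl))
  · intro h
    ext x
    rw [mem_closure_singleton_iff, mem_closure_singleton_iff, h]

end Rat

theorem stmt_12_general (m : ℕ) :
    Nat.card {S : Subring ↥(Subring.closure {(1 / (m : ℚ) : ℚ)}) |
        ∃ a, S = Subring.closure {a}} = 2 ^ m.primeFactors.card := by
  set R := Subring.closure {(1 / (m : ℚ) : ℚ)}
  have hR : ∀ x : ℚ, x ∈ R ↔ x.den.primeFactors ⊆ m.primeFactors := fun x => by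
    rw [Rat.mem_closure_singleton_iff, one_div, Rat.primeFactors_den_inv_natCast]
  have hrange : Set.range (fun a : R => (a : ℚ).den.primeFactors) = ↑m.primeFactors.powerset := by
    ext T
    rw [Set.mem_range, coe_powerset, Set.mem_preimage, Set.mem_powerset_iff, coe_subset]
    refine ⟨fun ⟨a, ha⟩ => ha ▸ (hR a).1 a.2, fun hT => ?_⟩
    have hden : ((∏ p ∈ T, p : ℕ) : ℚ)⁻¹.den.primeFactors = T := by
      rw [Rat.primeFactors_den_inv_natCast,
        Nat.primeFactors_prod fun p hp => Nat.prime_of_mem_primeFactors (hT hp)]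
    exact ⟨⟨_, (hR _).2 (by rwa [hden])⟩, hden⟩
  calc Nat.card {S : Subring R | ∃ a, S = Subring.closure {a}}
      = Nat.card (Set.range fun a : R => Subring.closure {a}) := by
        simp only [Set.range, eq_comm]
    _ = Nat.card (Set.range fun a : R => (a : ℚ).den.primeFactors) :=
        Nat.card_range_eq_of_ker_eq <| Setoid.ext fun a b =>
          (Subring.closure_singleton_eq_iff_coe a b).trans Rat.closure_singleton_eq_iff
    _ = 2 ^ m.primeFactors.card := by
        rw [hrange, Nat.card_coe_set_eq, Set.ncard_coe_finset, card_powerset]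

/-- For a positive integer `m` with `s` distinct prime divisors, the ring `ℤ[1/m]`
has exactly `2 ^ s` one-generated unital subrings. -/
theorem stmt_12 (m : ℕ) (hm : 1 ≤ m) :
    Nat.card {S : Subring ↥(Subring.closure {(1 / (m : ℚ) : ℚ)}) |
        ∃ a, S = Subring.closure {a}} = 2 ^ m.primeFactors.card :=
  stmt_12_general m
end

section
/- Let R be a unital ring of characteristic 0 such that every element r ∈ R is annihilated by a nonzero linear integer polynomial, i.e., for every r ∈ R there exist integers a, b, not both zero, with b·r = a·1 in R. Then there exists a unital ring homomorphism g : R → ℚ (namely, g(r) = a/b whenever b·r = a·1 with b ≠ 0). -/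
/-- If `R` is a unital ring of characteristic zero in which every element is annihilated
by some nonzero linear integer polynomial, then there is a unital ring homomorphism
`g : R → ℚ` sending `r` to `a/b` whenever `b • r = a • 1`. -/
theorem stmt_14 (R : Type*) [Ring R] [CharP R 0]
    (h : ∀ r : R, ∃ a b : ℤ, ¬ (a = 0 ∧ b = 0) ∧ b • r = a • (1 : R)) :
    ∃ g : R →+* ℚ, ∀ (r : R) (a b : ℤ), b ≠ 0 → b • r = a • (1 : R) →
      g r = (a : ℚ) / (b : ℚ) := by
  have hz : CharZero R := CharP.charP_to_charZero R
  have key : ∀ r : R, ∃ a b : ℤ, b ≠ 0 ∧ b • r = a • (1 : R) := by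
    intro r
    obtain ⟨a, b, hab, he⟩ := h r
    refine ⟨a, b, fun hb => hab ⟨?_, hb⟩, he⟩
    subst hb
    have : ((a : ℤ) : R) = 0 := by simpa [zsmul_one] using he.symm
    exact_mod_cast this
  choose num den hden hspec using key
  set f : R → ℚ := fun r => (num r : ℚ) / (den r : ℚ) with hf
  have uniq : ∀ (r : R) (a b : ℤ), b ≠ 0 → b • r = a • (1 : R) → f r = (a : ℚ) / b := by
    intro r a b hb he
    have h1 : (b * num r) • (1 : R) = (b * num r : ℤ) • (1 : R) := rfl
    have hcalc : ((b * num r : ℤ)) • (1 : R) = ((den r * a : ℤ)) • (1 : R) := by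
      calc (b * num r : ℤ) • (1 : R) = b • (num r • (1 : R)) := by rw [mul_smul]
        _ = b • (den r • r) := by rw [hspec]
        _ = (b * den r) • r := by rw [mul_smul]
        _ = (den r * b) • r := by rw [mul_comm]
        _ = den r • (b • r) := by rw [mul_smul]
        _ = den r • (a • (1 : R)) := by rw [he]
        _ = (den r * a) • (1 : R) := by rw [mul_smul]
    have h2 : b * num r = den r * a := by
      have := hcalc
      rw [zsmul_one, zsmul_one] at this
      exact_mod_cast this
    have hden' : ((den r : ℚ)) ≠ 0 := Int.cast_ne_zero.mpr (hden r)
    have hb' : ((b : ℚ)) ≠ 0 := Int.cast_ne_zero.mpr hb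
    rw [hf]
    rw [div_eq_div_iff hden' hb']
    have : ((b * num r : ℤ) : ℚ) = ((den r * a : ℤ) : ℚ) := by exact_mod_cast h2
    push_cast at this
    linarith
  refine ⟨{ toFun := f,
            map_one' := ?_,
            map_mul' := ?_,
            map_zero' := ?_,
            map_add' := ?_ }, fun r a b hb he => uniq r a b hb he⟩
  · have := uniq 1 1 1 one_ne_zero (by simp)
    simpa using this
  · intro x y
    show f (x * y) = f x * f y
    have hxy : (den x * den y) • (x * y) = (num x * num y) • (1 : R) := by
      calc (den x * den y) • (x * y) = (den x • x) * (den y • y) := (smul_mul_smul_comm _ _ _ _).symm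
        _ = (num x • (1 : R)) * (num y • (1 : R)) := by rw [hspec, hspec]
        _ = (num x * num y) • ((1 : R) * 1) := smul_mul_smul_comm _ _ _ _
        _ = (num x * num y) • (1 : R) := by rw [one_mul]
    have := uniq (x * y) (num x * num y) (den x * den y)
      (mul_ne_zero (hden x) (hden y)) hxy
    rw [this]
    push_cast
    rw [div_mul_div_comm]
  · have := uniq 0 0 1 one_ne_zero (by simp)
    show f 0 = 0
    simpa using this
  · intro x y
    show f (x + y) = f x + f y
    have hxy : (den x * den y) • (x + y) = (num x * den y + num y * den x) • (1 : R) := by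
      rw [smul_add, add_smul]
      congr 1
      · calc (den x * den y) • x = (den y * den x) • x := by rw [mul_comm]
          _ = den y • (den x • x) := mul_smul _ _ _
          _ = den y • (num x • (1 : R)) := by rw [hspec]
          _ = (den y * num x) • (1 : R) := (mul_smul _ _ _).symm
          _ = (num x * den y) • (1 : R) := by rw [mul_comm]
      · calc (den x * den y) • y = den x • (den y • y) := mul_smul _ _ _
          _ = den x • (num y • (1 : R)) := by rw [hspec]
          _ = (den x * num y) • (1 : R) := (mul_smul _ _ _).symm
          _ = (num y * den x) • (1 : R) := by rw [mul_comm]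
    have := uniq (x + y) (num x * den y + num y * den x) (den x * den y)
      (mul_ne_zero (hden x) (hden y)) hxy
    rw [this]
    have hdx : ((den x : ℚ)) ≠ 0 := Int.cast_ne_zero.mpr (hden x)
    have hdy : ((den y : ℚ)) ≠ 0 := Int.cast_ne_zero.mpr (hden y)
    push_cast
    rw [div_add_div _ _ hdx hdy]
    ring_nf
end

section
/- Let R be a (possibly nonunital) ring and let R¹ = Unitization ℤ R be the unital ring obtained by adjoining an identity, with canonical embedding i : R → R¹, i(a) = (0,a). Then the assignment ⟨a⟩ ↦ ⟨i(a)⟩₁ is a well-defined bijection from the set of one-generated subrings of R onto the set of one-generated unital subrings of R¹; that is: (i) for all a, b ∈ R, NonUnitalSubring.closure {a} = NonUnitalSubring.closure {b} if and only if Subring.closure {i(a)} = Subring.closure {i(b)}, and (ii) for every x ∈ R¹ there exists a ∈ R with Subring.closure {x} = Subring.closure {i(a)}. In particular the compressed commuting graph of R is isomorphic to the unital compressed commuting graph of R¹. -/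
open Unitization

private def sndSubring (R : Type*) [NonUnitalRing R] (a : R) : Subring (Unitization ℤ R) where
  carrier := {x | x.snd ∈ NonUnitalSubring.closure {a}}
  one_mem' := by simpa using zero_mem _
  mul_mem' := by
    intro x y hx hy
    simp only [Set.mem_setOf_eq, snd_mul] at *
    exact add_mem (add_mem (zsmul_mem hy _) (zsmul_mem hx _)) (mul_mem hx hy)
  add_mem' := by
    intro x y hx hy
    simp only [Set.mem_setOf_eq, snd_add] at *
    exact add_mem hx hy
  zero_mem' := by simpa using zero_mem _
  neg_mem' := by
    intro x hx
    simp only [Set.mem_setOf_eq, snd_neg] at *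
    exact neg_mem hx

private lemma snd_mem_of_mem {R : Type*} [NonUnitalRing R] {a : R}
    {x : Unitization ℤ R} (hx : x ∈ Subring.closure {(inr a : Unitization ℤ R)}) :
    x.snd ∈ NonUnitalSubring.closure {a} := by
  have h : Subring.closure {(inr a : Unitization ℤ R)} ≤ sndSubring R a := by
    rw [Subring.closure_le]
    intro y hy
    rw [Set.mem_singleton_iff] at hy
    subst hy
    exact NonUnitalSubring.subset_closure rfl
  exact h hx

private lemma inr_mem_of_mem {R : Type*} [NonUnitalRing R] {a r : R}
    (hr : r ∈ NonUnitalSubring.closure {a}) :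
    (inr r : Unitization ℤ R) ∈ Subring.closure {(inr a : Unitization ℤ R)} := by
  induction hr using NonUnitalSubring.closure_induction with
  | mem x hx => rw [Set.mem_singleton_iff] at hx; subst hx; exact Subring.subset_closure rfl
  | zero => simpa using zero_mem _
  | add x y _ _ hx hy => simpa using add_mem hx hy
  | neg x _ hx => simpa using neg_mem hx
  | mul x y _ _ hx hy => simpa using mul_mem hx hy

private lemma inl_mem {R : Type*} [NonUnitalRing R] (k : ℤ) (S : Subring (Unitization ℤ R)) :
    (inl k : Unitization ℤ R) ∈ S := by
  have : (inl k : Unitization ℤ R) = k • (1 : Unitization ℤ R) := by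
    ext
    · rw [Unitization.fst_smul, Unitization.fst_inl, Unitization.fst_one, smul_eq_mul, mul_one]
    · rw [Unitization.snd_smul, Unitization.snd_inl, Unitization.snd_one, smul_zero]
  rw [this]
  exact zsmul_mem (one_mem S) k

/-- For a (possibly nonunital) ring `R` with unitization `R¹ = Unitization ℤ R` and
canonical embedding `i : R → R¹`, the assignment `⟨a⟩ ↦ ⟨i a⟩₁` is a well-defined
bijection from the one-generated subrings of `R` onto the one-generated unital
subrings of `R¹`. -/
theorem stmt_15 (R : Type*) [NonUnitalRing R] :
    (∀ a b : R,
      NonUnitalSubring.closure {a} = NonUnitalSubring.closure {b} ↔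
      Subring.closure {(Unitization.inr a : Unitization ℤ R)} =
        Subring.closure {(Unitization.inr b : Unitization ℤ R)}) ∧
    (∀ x : Unitization ℤ R, ∃ a : R,
      Subring.closure {x} =
        Subring.closure {(Unitization.inr a : Unitization ℤ R)}) := by
  constructor
  · intro a b
    constructor
    · intro h
      apply le_antisymm <;> rw [Subring.closure_le, Set.singleton_subset_iff]
      · exact inr_mem_of_mem (h ▸ NonUnitalSubring.subset_closure rfl)
      · exact inr_mem_of_mem (h ▸ NonUnitalSubring.subset_closure rfl)
    · intro h
      apply le_antisymm <;> rw [NonUnitalSubring.closure_le, Set.singleton_subset_iff]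
      · have := snd_mem_of_mem (a := b) (h ▸ Subring.subset_closure
          (Set.mem_singleton (inr a : Unitization ℤ R)))
        simpa using this
      · have := snd_mem_of_mem (a := a) (h.symm ▸ Subring.subset_closure
          (Set.mem_singleton (inr b : Unitization ℤ R)))
        simpa using this
  · intro x
    refine ⟨x.snd, le_antisymm ?_ ?_⟩ <;> rw [Subring.closure_le, Set.singleton_subset_iff]
    · have h1 : (inr x.snd : Unitization ℤ R) ∈
          Subring.closure {(inr x.snd : Unitization ℤ R)} := Subring.subset_closure rfl
      have h2 := add_mem (inl_mem x.fst _) h1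
      rwa [inl_fst_add_inr_snd_eq] at h2
    · have : (inr x.snd : Unitization ℤ R) = x - inl x.fst := by
        rw [eq_sub_iff_add_eq, add_comm, inl_fst_add_inr_snd_eq]
      rw [this]
      exact sub_mem (Subring.subset_closure rfl) (inl_mem _ _)
end

section
/- Let J be the ideal of the polynomial ring ℤ[x] generated by 2(2x−1) and x(2x−1). Then the quotient ring ℤ[x]/J is isomorphic as a unital ring to the direct product ℤ[1/2] × ℤ/2ℤ, where ℤ[1/2] is the subring of ℚ generated by 1/2. -/
/-!
The ideal factors as `J = (2x - 1) · (2, x)`, and the factors are comaximal because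
`x · 2 - (2x - 1) = 1`, so the Chinese remainder theorem splits `ℤ[x]/J` into
`ℤ[x]/(2x - 1) × ℤ[x]/(2, x)`. The first factor is `ℤ` with an inverse of `2` adjoined,
i.e. the localization of `ℤ` away from `2`, which `ℤ[1/2]` also is; the second is `ℤ/2ℤ`.
-/

open Polynomial

section AwayProd

variable {R : Type*} [CommRing R] (r : R)

theorem isCoprime_span_C_mul_X_sub_one_span_C_X :
    IsCoprime (Ideal.span {C r * X - 1}) (Ideal.span {C r, X}) := by
  rw [Ideal.isCoprime_iff_exists]
  exact ⟨-(C r * X - 1), neg_mem (Ideal.mem_span_singleton_self _),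
    X * C r, Ideal.mul_mem_left _ _ (Ideal.subset_span (by simp)), by ring⟩

noncomputable def quotientEquivAwayProdQuotient (S : Type*) [CommRing S] [Algebra R S]
    [IsLocalization.Away r S] :
    R[X] ⧸ Ideal.span {C r * X - 1} * Ideal.span {C r, X} ≃+* S × R ⧸ Ideal.span {r} :=
  have := IsLocalization.adjoin_inv r
  (Ideal.quotientMulEquivQuotientProd _ _ (isCoprime_span_C_mul_X_sub_one_span_C_X r)).trans <|
    RingEquiv.prodCongr
      (IsLocalization.algEquiv (Submonoid.powers r) (AdjoinRoot (C r * X - 1)) S).toRingEquiv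
      ((Ideal.quotEquivOfEq (by rw [map_zero, sub_zero])).trans
        (quotientSpanCXSubCAlgEquiv r 0).toRingEquiv)

end AwayProd

theorem exists_mul_pow_eq_intCast_of_mem_closure_one_div {n : ℤ} (hn : n ≠ 0) {q : ℚ}
    (hq : q ∈ Subring.closure {1 / (n : ℚ)}) : ∃ (k : ℕ) (a : ℤ), q * n ^ k = a := by
  induction hq using Subring.closure_induction with
  | mem x hx =>
    rw [Set.mem_singleton_iff.mp hx]
    exact ⟨1, 1, by simp [hn]⟩
  | zero => exact ⟨0, 0, by simp⟩
  | one => exact ⟨0, 1, by simp⟩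
  | add x y _ _ hx hy =>
    obtain ⟨k, a, hx⟩ := hx
    obtain ⟨l, b, hy⟩ := hy
    exact ⟨k + l, a * n ^ l + b * n ^ k, by push_cast; rw [← hx, ← hy]; ring⟩
  | neg x _ hx =>
    obtain ⟨k, a, hx⟩ := hx
    exact ⟨k, -a, by push_cast; rw [← hx]; ring⟩
  | mul x y _ _ hx hy =>
    obtain ⟨k, a, hx⟩ := hx
    obtain ⟨l, b, hy⟩ := hy
    exact ⟨k + l, a * b, by push_cast; rw [← hx, ← hy]; ring⟩

theorem isLocalization_away_closure_one_div {n : ℤ} (hn : n ≠ 0) :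
    IsLocalization.Away n (Subring.closure {1 / (n : ℚ)}) := by
  refine IsLocalization.Away.mk n ?_ ?_ ?_
  · refine IsUnit.of_mul_eq_one ⟨1 / n, Subring.subset_closure rfl⟩ (Subtype.ext ?_)
    simp [hn]
  · rintro ⟨q, hq⟩
    obtain ⟨k, a, h⟩ := exists_mul_pow_eq_intCast_of_mem_closure_one_div hn hq
    exact ⟨k, a, Subtype.ext (by simpa using h)⟩
  · intro a b h
    exact ⟨0, by simpa using congrArg Subtype.val h⟩

theorem span_two_mul_two_X_sub_one_X_mul_two_X_sub_one :
    (Ideal.span {2 * (2 * X - 1), X * (2 * X - 1)} : Ideal ℤ[X]) =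
      Ideal.span {C 2 * X - 1} * Ideal.span {C 2, X} := by
  rw [Ideal.span_mul_span', Set.singleton_mul, Set.image_pair, C_ofNat,
    mul_comm (2 * X - 1) 2, mul_comm (2 * X - 1) X]

/-- The quotient of `ℤ[x]` by the ideal generated by `2(2x-1)` and `x(2x-1)` is
isomorphic as a unital ring to `ℤ[1/2] × ℤ/2ℤ`. -/
theorem stmt_16 :
    Nonempty
      ((Polynomial ℤ ⧸ (Ideal.span {2 * (2 * X - 1), X * (2 * X - 1)} : Ideal (Polynomial ℤ))) ≃+*
        (↥(Subring.closure {(1 / 2 : ℚ)}) × ZMod 2)) := by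
  have := isLocalization_away_closure_one_div (n := 2) two_ne_zero
  exact ⟨(Ideal.quotEquivOfEq span_two_mul_two_X_sub_one_X_mul_two_X_sub_one).trans <|
    (quotientEquivAwayProdQuotient 2 _).trans <|
      (RingEquiv.refl _).prodCongr (Int.quotientSpanEquivZMod 2)⟩
end

section
/- Let J be the ideal of ℤ[x] generated by 2(2x−1) and x(2x−1) and let R = ℤ[x]/J. Then R has exactly 3 unital subrings generated by one element, i.e., the set {S : S is a subring of R and S = ⟨a⟩₁ for some a ∈ R} has exactly 3 elements. (Since R is commutative, its unital compressed commuting graph is the complete graph with all loops on 3 vertices.) -/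
open Polynomial

/-!
Evaluation at `1/2` and the constant coefficient mod `2` embed `R = ℤ[x]/J` into `ℚ × 𝔽₂`
(Gauss's lemma: `p(1/2) = 0` forces `2x - 1 ∣ p`, and then `J = (2x - 1)·(2, x)`). Let `t` be
the class of `x`. If `a ∈ R` has integral first coordinate `n`, then `a - n` is `0` or the
idempotent `e = 1 - 2t`, so `⟨a⟩₁` is the prime subring or `⟨e⟩₁`. Otherwise the first
coordinate is `(2j+1)/2^(k+1)`, and `2^k a - j` has first coordinate `1/2`, hence is `t` or
`1 - t`; either way `⟨a⟩₁ = R`. The three are distinct: `e` is not an integer, and the first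
coordinates of `⟨e⟩₁` are integers, while `t` has first coordinate `1/2`.
-/

theorem ZMod.eq_zero_or_eq_one (z : ZMod 2) : z = 0 ∨ z = 1 := by decide +revert

theorem Subring.closure_singleton_intCast_add {R : Type*} [Ring R] (n : ℤ) (a : R) :
    Subring.closure {(n : R) + a} = Subring.closure {a} := by
  apply le_antisymm <;> rw [Subring.closure_le, Set.singleton_subset_iff]
  · exact add_mem (intCast_mem _ n) (Subring.subset_closure rfl)
  · simpa using sub_mem (Subring.subset_closure (Set.mem_singleton ((n : R) + a)))
      (intCast_mem _ n)

theorem Rat.exists_eq_intCast_or_eq_odd_div_two_pow {q : ℚ} {m : ℕ} {w : ℤ}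
    (h : 2 ^ m * q = w) :
    (∃ n : ℤ, q = n) ∨ ∃ (j : ℤ) (k : ℕ), q = (2 * j + 1) / 2 ^ (k + 1) := by
  induction m generalizing q with
  | zero => exact .inl ⟨w, by simpa using h⟩
  | succ m ih =>
    rcases ih (q := 2 * q) (by rw [← h]; ring) with ⟨n, hn⟩ | ⟨j, k, hjk⟩
    · obtain ⟨j, rfl | rfl⟩ := Int.even_or_odd' n
      · exact .inl ⟨j, by push_cast at hn; linarith⟩
      · exact .inr ⟨j, 0, by push_cast at hn; linarith⟩
    · exact .inr ⟨j, k + 1, by rw [pow_succ]; field_simp at hjk ⊢; linarith⟩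

theorem Polynomial.exists_two_pow_mul_aeval_half_eq_intCast (p : ℤ[X]) :
    ∃ (m : ℕ) (w : ℤ), 2 ^ m * aeval (1 / 2 : ℚ) p = w := by
  refine ⟨p.natDegree, (p.scaleRoots 2).eval 1, ?_⟩
  have h := scaleRoots_eval₂_mul (p := p) (Int.castRingHom ℚ) (1 / 2) 2
  rw [show (Int.castRingHom ℚ) 2 * (1 / 2) = Int.castRingHom ℚ 1 by norm_num, eval₂_hom] at h
  simpa [aeval_def] using h.symm

theorem Polynomial.two_mul_X_sub_one_dvd_of_aeval_half_eq_zero {p : ℤ[X]}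
    (h : aeval (1 / 2 : ℚ) p = 0) : 2 * X - 1 ∣ p := by
  have hprim : (2 * X - 1 : ℤ[X]).IsPrimitive := fun r hr => by
    have := (C_dvd_iff_dvd_coeff _ _).1 hr 0
    simp only [coeff_sub, coeff_ofNat_mul, coeff_X_zero, mul_zero, coeff_one_zero, zero_sub,
      dvd_neg] at this
    exact isUnit_of_dvd_one this
  have hmap : (2 * X - 1 : ℤ[X]).map (Int.castRingHom ℚ) = C 2 * (X - C (1 / 2)) := by
    rw [mul_sub, ← C_mul, mul_one_div_cancel two_ne_zero, C_1, map_ofNat C 2]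
    simp
  rw [IsPrimitive.Int.dvd_iff_map_cast_dvd_map_cast _ _ hprim, hmap,
    (isUnit_C.2 (Ne.isUnit two_ne_zero)).mul_left_dvd, dvd_iff_isRoot, IsRoot, eval_map]
  exact h

namespace IntPolyQuot

noncomputable section

abbrev J : Ideal ℤ[X] := Ideal.span {2 * (2 * X - 1), X * (2 * X - 1)}

abbrev R := ℤ[X] ⧸ J

theorem mem_J_iff {p : ℤ[X]} : p ∈ J ↔ aeval (1 / 2 : ℚ) p = 0 ∧ 2 ∣ p.coeff 0 := by
  constructor
  · intro hp
    obtain ⟨c, d, rfl⟩ := Ideal.mem_span_pair.1 hp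
    refine ⟨by simp [map_ofNat], ?_⟩
    simp [mul_coeff_zero]
  · rintro ⟨hroot, heven⟩
    obtain ⟨q, rfl⟩ := two_mul_X_sub_one_dvd_of_aeval_half_eq_zero hroot
    obtain ⟨m, hm⟩ : 2 ∣ q.coeff 0 := by
      simpa [mul_coeff_zero] using heven
    refine Ideal.mem_span_pair.2 ⟨C m, q.divX, ?_⟩
    conv_rhs => rw [← X_mul_divX_add q, hm]
    simp only [C_mul, C_ofNat]
    ring

def evalHalf : R →+* ℚ :=
  Ideal.Quotient.lift J (aeval (1 / 2 : ℚ)).toRingHom fun _ hp => (mem_J_iff.1 hp).1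

def constCoeffModTwo : R →+* ZMod 2 :=
  Ideal.Quotient.lift J ((Int.castRingHom (ZMod 2)).comp constantCoeff) fun _ hp => by
    simpa [ZMod.intCast_zmod_eq_zero_iff_dvd] using (mem_J_iff.1 hp).2

@[simp] theorem evalHalf_mk (p : ℤ[X]) :
    evalHalf (Ideal.Quotient.mk J p) = aeval (1 / 2 : ℚ) p :=
  rfl

@[simp] theorem constCoeffModTwo_mk (p : ℤ[X]) :
    constCoeffModTwo (Ideal.Quotient.mk J p) = (p.coeff 0 : ZMod 2) :=
  rfl

theorem ext_evalHalf_constCoeffModTwo {x y : R} (h : evalHalf x = evalHalf y)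
    (h₂ : constCoeffModTwo x = constCoeffModTwo y) : x = y := by
  obtain ⟨p, rfl⟩ := Ideal.Quotient.mk_surjective x
  obtain ⟨q, rfl⟩ := Ideal.Quotient.mk_surjective y
  refine Ideal.Quotient.eq.2 (mem_J_iff.2 ⟨?_, ?_⟩)
  · simpa [sub_eq_zero] using h
  · simpa [ZMod.intCast_eq_intCast_iff_dvd_sub, ← dvd_neg (b := p.coeff 0 - q.coeff 0)]
      using h₂

def t : R := Ideal.Quotient.mk J X

def e : R := 1 - 2 * t

@[simp] theorem evalHalf_t : evalHalf t = 1 / 2 := by simp [t, evalHalf]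

@[simp] theorem constCoeffModTwo_t : constCoeffModTwo t = 0 := by simp [t, constCoeffModTwo]

@[simp] theorem evalHalf_e : evalHalf e = 0 := by simp [e, map_ofNat]

@[simp] theorem constCoeffModTwo_e : constCoeffModTwo e = 1 := by simp [e, map_ofNat]

theorem eq_zero_or_eq_e_of_evalHalf_eq_zero {x : R} (hx : evalHalf x = 0) : x = 0 ∨ x = e := by
  rcases ZMod.eq_zero_or_eq_one (constCoeffModTwo x) with h | h
  · exact .inl (ext_evalHalf_constCoeffModTwo (by simpa using hx) (by simpa using h))
  · exact .inr (ext_evalHalf_constCoeffModTwo (by simpa using hx) (by simpa using h))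

theorem eq_t_or_eq_one_sub_t_of_evalHalf_eq_half {s : R} (hs : evalHalf s = 1 / 2) :
    s = t ∨ s = 1 - t := by
  rcases ZMod.eq_zero_or_eq_one (constCoeffModTwo s) with h | h
  · exact .inl (ext_evalHalf_constCoeffModTwo (by simpa using hs) (by simpa using h))
  · exact .inr (ext_evalHalf_constCoeffModTwo (by simp [hs]; norm_num) (by simpa using h))

theorem closure_t : Subring.closure {t} = ⊤ := by
  refine (Subring.eq_top_iff' _).2 fun y => ?_
  obtain ⟨p, rfl⟩ := Ideal.Quotient.mk_surjective y
  induction p using Polynomial.induction_on with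
  | C a => simp [eq_intCast]
  | add p q hp hq => rw [map_add]; exact add_mem hp hq
  | monomial n a h =>
    rw [pow_succ, ← mul_assoc, map_mul]
    exact mul_mem h (Subring.subset_closure rfl)

theorem closure_eq_top_of_evalHalf_eq_half {x s : R} (hs : s ∈ Subring.closure {x})
    (hs_half : evalHalf s = 1 / 2) : Subring.closure {x} = ⊤ := by
  have ht : t ∈ Subring.closure {x} := by
    rcases eq_t_or_eq_one_sub_t_of_evalHalf_eq_half hs_half with rfl | rfl
    · exact hs
    · simpa using sub_mem (one_mem _) hs
  rw [eq_top_iff, ← closure_t, Subring.closure_le, Set.singleton_subset_iff]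
  exact ht

theorem closure_ne_top_of_evalHalf_mem_bot {x : R} (hx : evalHalf x ∈ (⊥ : Subring ℚ)) :
    Subring.closure {x} ≠ ⊤ := by
  intro htop
  have hle : Subring.closure {x} ≤ (⊥ : Subring ℚ).comap evalHalf := by
    rwa [Subring.closure_le, Set.singleton_subset_iff]
  obtain ⟨n, hn⟩ := Subring.mem_bot.1 (hle (htop ▸ Subring.mem_top t))
  rw [evalHalf_t] at hn
  have : 2 * n = 1 := by exact_mod_cast (by linarith : (2 * n : ℚ) = 1)
  omega

theorem e_not_mem_bot : e ∉ (⊥ : Subring R) := by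
  rintro ⟨n, hn⟩
  have h₀ : (n : ℚ) = 0 := by simpa using congrArg evalHalf hn
  have h₁ : (n : ZMod 2) = 1 := by simpa using congrArg constCoeffModTwo hn
  rw [Int.cast_eq_zero.1 h₀] at h₁
  exact zero_ne_one h₁

theorem closure_singleton_eq_bot_or_closure_e_or_top (x : R) :
    Subring.closure {x} = ⊥ ∨ Subring.closure {x} = Subring.closure {e} ∨
      Subring.closure {x} = ⊤ := by
  obtain ⟨p, rfl⟩ := Ideal.Quotient.mk_surjective x
  obtain ⟨m, w, hw⟩ := exists_two_pow_mul_aeval_half_eq_intCast p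
  rcases Rat.exists_eq_intCast_or_eq_odd_div_two_pow hw with ⟨n, hn⟩ | ⟨j, k, hjk⟩
  · rcases eq_zero_or_eq_e_of_evalHalf_eq_zero (x := Ideal.Quotient.mk J p - n)
      (by rw [map_sub, evalHalf_mk, hn, map_intCast, sub_self]) with h | h
    · left
      rw [sub_eq_zero.1 h, Subring.closure_singleton_intCast]
    · right; left
      rw [sub_eq_iff_eq_add'.1 h, Subring.closure_singleton_intCast_add]
  · right; right
    refine closure_eq_top_of_evalHalf_eq_half (s := 2 ^ k * Ideal.Quotient.mk J p - j) ?_ ?_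
    · exact sub_mem (mul_mem (pow_mem (ofNat_mem _ 2) k) (Subring.subset_closure rfl))
        (intCast_mem _ j)
    · simp only [map_sub, map_mul, map_pow, map_ofNat, map_intCast, evalHalf_mk, hjk]
      field_simp
      ring

end

end IntPolyQuot

/-- The quotient of `ℤ[x]` by the ideal generated by `2(2x-1)` and `x(2x-1)` has
exactly `3` one-generated unital subrings. -/
theorem stmt_17 :
    Nat.card {S : Subring
        (Polynomial ℤ ⧸ (Ideal.span {2 * (2 * X - 1), X * (2 * X - 1)} : Ideal (Polynomial ℤ))) |
      ∃ a, S = Subring.closure {a}} = 3 := by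
  open IntPolyQuot in
  have hset : {S : Subring R | ∃ a, S = Subring.closure {a}} =
      {⊥, Subring.closure {e}, ⊤} := by
    ext S
    simp only [Set.mem_insert_iff, Set.mem_singleton_iff]
    constructor
    · rintro ⟨x, rfl⟩
      exact closure_singleton_eq_bot_or_closure_e_or_top x
    · rintro (rfl | rfl | rfl)
      exacts [⟨0, Subring.closure_singleton_zero.symm⟩, ⟨e, rfl⟩, ⟨t, closure_t.symm⟩]
  rw [hset, Nat.card_coe_set_eq, Set.ncard_eq_three]
  refine ⟨_, _, _, fun h => e_not_mem_bot (by rw [h]; exact Subring.subset_closure rfl),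
    ?_, ?_, rfl⟩
  · simpa using closure_ne_top_of_evalHalf_mem_bot (x := (0 : R)) (by simp [zero_mem])
  · exact closure_ne_top_of_evalHalf_mem_bot (by simp [zero_mem])
end

section
/- Consider the ring M of 2×2 matrices over the field with two elements (ZMod 2), and call a matrix a upper triangular if its (2,1) entry is zero. Then the set of nonunital subrings of M that are generated by a single upper triangular matrix, i.e., {S : S is a nonunital subring of M and S = NonUnitalSubring.closure {a} for some a ∈ M with a₂₁ = 0}, has exactly 8 elements. (Equivalently, the compressed commuting graph of the ring of 2×2 upper triangular matrices over GF(2) has 8 vertices.) -/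
abbrev M2 := Matrix (Fin 2) (Fin 2) (ZMod 2)

lemma m2_add_self (x : M2) : x + x = 0 := by
  ext i j
  simp only [Matrix.add_apply, Matrix.zero_apply]
  have : ∀ t : ZMod 2, t + t = 0 := by decide
  exact this _

lemma m2_neg (x : M2) : -x = x := by
  ext i j
  simp only [Matrix.neg_apply]
  have : ∀ t : ZMod 2, -t = t := by decide
  exact this _

/-- The pair subring `{0, a}` for `a` with `a² ∈ {0, a}`. -/
def P (a : M2) (h : a * a = 0 ∨ a * a = a) : NonUnitalSubring M2 where
  carrier := {0, a}
  zero_mem' := Or.inl rfl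
  add_mem' := by
    rintro x y (rfl | rfl) (rfl | rfl) <;>
      simp [m2_add_self]
  neg_mem' := by
    rintro x (rfl | rfl) <;> simp [m2_neg]
  mul_mem' := by
    rintro x y (rfl | rfl) (rfl | rfl) <;> simp
    rcases h with h | h <;> simp [h]

lemma mem_P {a : M2} {h} {x : M2} : x ∈ P a h ↔ x = 0 ∨ x = a := by
  change x ∈ ({0, a} : Set M2) ↔ _
  simp [Set.mem_insert_iff]

lemma closure_eq_P (a : M2) (h : a * a = 0 ∨ a * a = a) :
    NonUnitalSubring.closure {a} = P a h := by
  apply le_antisymm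
  · rw [NonUnitalSubring.closure_le]
    intro x hx
    rw [Set.mem_singleton_iff] at hx
    subst hx
    exact Or.inr rfl
  · intro x hx
    rcases mem_P.1 hx with rfl | rfl
    · exact zero_mem _
    · exact NonUnitalSubring.subset_closure rfl

lemma P_inj {a b : M2} {ha hb} (h : P a ha = P b hb) : a = b := by
  have h1 : a ∈ P b hb := h ▸ (Or.inr rfl : a ∈ P a ha)
  have h2 : b ∈ P a ha := h.symm ▸ (Or.inr rfl : b ∈ P b hb)
  rcases mem_P.1 h1 with rfl | h1
  · rcases mem_P.1 h2 with rfl | h2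
    · rfl
    · exact h2.symm
  · exact h1

/-- The four-element subring generated by `!![1,1;0,1]`. -/
def Q : NonUnitalSubring M2 where
  carrier := {0, !![1,1;0,1], 1, !![0,1;0,0]}
  zero_mem' := by decide
  add_mem' := by intro x y hx hy; revert hx hy; revert x y; decide
  neg_mem' := by intro x hx; revert hx; revert x; decide
  mul_mem' := by intro x y hx hy; revert hx hy; revert x y; decide

lemma mem_Q {x : M2} :
    x ∈ Q ↔ x = 0 ∨ x = !![1,1;0,1] ∨ x = 1 ∨ x = !![0,1;0,0] := by
  change x ∈ ({0, !![1,1;0,1], 1, !![0,1;0,0]} : Set M2) ↔ _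
  simp [Set.mem_insert_iff]

lemma closure_eq_Q : NonUnitalSubring.closure {(!![1,1;0,1] : M2)} = Q := by
  apply le_antisymm
  · rw [NonUnitalSubring.closure_le]
    intro x hx
    rw [Set.mem_singleton_iff] at hx
    subst hx
    exact mem_Q.2 (Or.inr (Or.inl rfl))
  · have hw : (!![1,1;0,1] : M2) ∈ NonUnitalSubring.closure {(!![1,1;0,1] : M2)} :=
      NonUnitalSubring.subset_closure rfl
    have h1 : (1 : M2) ∈ NonUnitalSubring.closure {(!![1,1;0,1] : M2)} := by
      have : (!![1,1;0,1] : M2) * !![1,1;0,1] = 1 := by decide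
      exact this ▸ mul_mem hw hw
    have he : (!![0,1;0,0] : M2) ∈ NonUnitalSubring.closure {(!![1,1;0,1] : M2)} := by
      have : (!![1,1;0,1] : M2) + 1 = !![0,1;0,0] := by decide
      exact this ▸ add_mem hw h1
    intro x hx
    rcases mem_Q.1 hx with rfl | rfl | rfl | rfl
    · exact zero_mem _
    · exact hw
    · exact h1
    · exact he

lemma Q_ne_P (a : M2) (h) : Q ≠ P a h := by
  intro hQ
  have h1 : (1 : M2) ∈ P a h := hQ ▸ (mem_Q.2 (Or.inr (Or.inr (Or.inl rfl))))
  have h2 : (!![0,1;0,0] : M2) ∈ P a h := hQ ▸ (mem_Q.2 (Or.inr (Or.inr (Or.inr rfl))))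
  rcases mem_P.1 h1 with h1 | h1
  · exact absurd h1 (by decide)
  · rcases mem_P.1 h2 with h2 | h2
    · exact absurd h2 (by decide)
    · rw [← h1] at h2; exact absurd h2 (by decide)

lemma zmod2_cases (x : ZMod 2) : x = 0 ∨ x = 1 := by revert x; decide

/-- In the ring of `2 × 2` matrices over `GF(2)`, there are exactly `8` nonunital
subrings generated by a single upper triangular matrix. In other words, the compressed
commuting graph of the ring of `2 × 2` upper triangular matrices over `GF(2)` has `8`
vertices. -/
theorem stmt_19 :
    Nat.card {S : NonUnitalSubring (Matrix (Fin 2) (Fin 2) (ZMod 2)) |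
      ∃ a : Matrix (Fin 2) (Fin 2) (ZMod 2), a 1 0 = 0 ∧
        S = NonUnitalSubring.closure {a}} = 8 := by
  have hset : {S : NonUnitalSubring M2 |
      ∃ a : M2, a 1 0 = 0 ∧ S = NonUnitalSubring.closure {a}} =
      ({NonUnitalSubring.closure {!![0,0;0,0]}, NonUnitalSubring.closure {!![0,0;0,1]},
        NonUnitalSubring.closure {!![0,1;0,0]}, NonUnitalSubring.closure {!![0,1;0,1]},
        NonUnitalSubring.closure {!![1,0;0,0]}, NonUnitalSubring.closure {!![1,0;0,1]},
        NonUnitalSubring.closure {!![1,1;0,0]}, NonUnitalSubring.closure {!![1,1;0,1]}} :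
        Set (NonUnitalSubring M2)) := by
    ext S
    constructor
    · rintro ⟨a, ha, rfl⟩
      have e := Matrix.eta_fin_two a
      rw [ha] at e
      rcases zmod2_cases (a 0 0) with h00 | h00 <;>
        rcases zmod2_cases (a 0 1) with h01 | h01 <;>
        rcases zmod2_cases (a 1 1) with h11 | h11 <;>
        rw [h00, h01, h11] at e <;> rw [e] <;> simp
    · intro hS
      simp only [Set.mem_insert_iff, Set.mem_singleton_iff] at hS
      rcases hS with rfl | rfl | rfl | rfl | rfl | rfl | rfl | rfl
      · exact ⟨_, by decide, rfl⟩
      · exact ⟨_, by decide, rfl⟩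
      · exact ⟨_, by decide, rfl⟩
      · exact ⟨_, by decide, rfl⟩
      · exact ⟨_, by decide, rfl⟩
      · exact ⟨_, by decide, rfl⟩
      · exact ⟨_, by decide, rfl⟩
      · exact ⟨_, by decide, rfl⟩
  rw [hset]
  rw [closure_eq_P !![0,0;0,0] (by decide), closure_eq_P !![0,0;0,1] (by decide),
    closure_eq_P !![0,1;0,0] (by decide), closure_eq_P !![0,1;0,1] (by decide),
    closure_eq_P !![1,0;0,0] (by decide), closure_eq_P !![1,0;0,1] (by decide),
    closure_eq_P !![1,1;0,0] (by decide), closure_eq_Q]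
  rw [Nat.card_coe_set_eq]
  have hne : ∀ (a b : M2) (ha hb), a ≠ b → P a ha ≠ P b hb := by
    intro a b ha hb hab h
    exact hab (P_inj h)
  repeat
    rw [Set.ncard_insert_of_notMem (by
      simp only [Set.mem_insert_iff, Set.mem_singleton_iff]
      push_neg
      and_intros <;>
        first
          | exact hne _ _ _ _ (by decide)
          | exact (Q_ne_P _ _).symm) (Set.toFinite _)]
  simp [Set.ncard_singleton]
end
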